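/- arXiv:1803.02955 — 14 statements merged into one kernel-verified Lean document; each statement's English description precedes it below -/
import Mathlib

section
/- Assume βl < 0. Then every point (x, u, y, z, t) of T satisfies the inequality (u − βl·x)·(u − γl·x) ≤ −βl·x·(t − γl). -/
theorem stmt0 (βl βu γl γu x u y z t : ℝ) (hβl : βl < 0)
    (hu : u = x * t) (hyu : y + u ≤ 0) (hzx : z + x ≤ 1)
    (hyz1 : y ≤ βu * z) (hyz2 : βl * z ≤ y) (hz : 0 ≤ z)
    (hx0 : 0 ≤ x) (hx1 : x ≤ 1) (ht1 : γl ≤ t) (ht2 : t ≤ γu) :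
    (u - βl * x) * (u - γl * x) ≤ -βl * x * (t - γl) := by
  subst hu
  have h1 : 0 ≤ x * (t - γl) := mul_nonneg hx0 (by linarith)
  have h2 : x * t + βl * (1 - x) ≤ 0 := by nlinarith
  nlinarith [mul_nonpos_of_nonneg_of_nonpos h1 h2]
end

section
/- Assume βl < 0. Then every point (x, u, y, z, t) of T satisfies the inequality (−βl)·(t − γl) + (βl − γl)·(u − γl·x) ≥ 0. -/
theorem stmt1 (βl βu γl γu x u y z t : ℝ) (hβl : βl < 0)
    (hu : u = x * t) (hyu : y + u ≤ 0) (hzx : z + x ≤ 1)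
    (hyz1 : y ≤ βu * z) (hyz2 : βl * z ≤ y) (hz : 0 ≤ z)
    (hx0 : 0 ≤ x) (hx1 : x ≤ 1) (ht1 : γl ≤ t) (ht2 : t ≤ γu) :
    0 ≤ (-βl) * (t - γl) + (βl - γl) * (u - γl * x) := by
  subst hu
  have hub : x * t ≤ -βl * (1 - x) := by nlinarith
  rcases le_or_gt ((γl - βl) * x) (-βl) with h | h
  · nlinarith [mul_nonneg (sub_nonneg.2 ht1) (sub_nonneg.2 h)]
  · have hpos : 0 < γl - βl := by nlinarith
    nlinarith [mul_le_mul_of_nonneg_left hub hpos.le, mul_nonneg hx0 (sub_nonneg.2 ht1)]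
end

section
/- Assume βu > 0 and γl < 0. Then every point (x, u, y, z, t) of T with y > 0 satisfies the inequality (γu − γl)·y + βu·(γu·x − u) + γl·y·(u − γl·x)/(y + u − γl·x) ≤ βu·(γu − t). -/
theorem stmt2 (βl βu γl γu x u y z t : ℝ) (hβu : 0 < βu) (hγl : γl < 0)
    (hu : u = x * t) (hyu : y + u ≤ 0) (hzx : z + x ≤ 1)
    (hyz1 : y ≤ βu * z) (hyz2 : βl * z ≤ y) (hz : 0 ≤ z)
    (hx0 : 0 ≤ x) (hx1 : x ≤ 1) (ht1 : γl ≤ t) (ht2 : t ≤ γu)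
    (hy : 0 < y) :
    (γu - γl) * y + βu * (γu * x - u) + γl * y * (u - γl * x) / (y + u - γl * x) ≤
      βu * (γu - t) := by
  subst hu
  have ha : 0 ≤ x * t - γl * x := by
    have := mul_nonneg hx0 (sub_nonneg.2 ht1)
    nlinarith
  have hD : 0 < y + x * t - γl * x := by linarith
  have h2 : y ≤ βu * (1 - x) := by nlinarith
  have key : γl * y * (x * t - γl * x) / (y + x * t - γl * x) ≤
      βu * (γu - t) - (γu - γl) * y - βu * (γu * x - x * t) := by
    rw [div_le_iff₀ hD]
    nlinarith [mul_nonneg (mul_nonneg (sub_nonneg.2 ht2)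
        (by linarith : (0:ℝ) ≤ βu * (1 - x) - y)) hD.le,
      mul_nonpos_of_nonneg_of_nonpos (mul_nonneg hy.le (sub_nonneg.2 ht1)) hyu]
  linarith
end

section
/- Assume βu > 0 and γl < 0. Then every point (x, u, y, z, t) of T satisfies the inequality βu·(γu·x − u) + h(y, u − γl·x) ≤ βu·(γu − t). -/
noncomputable def hfun (γl γu y v : ℝ) : ℝ :=
  if y ≤ 0 then 0 else (γu - γl) * y + γl * (y * v / (y + v))

theorem stmt3 (βl βu γl γu x u y z t : ℝ) (hβu : 0 < βu) (hγl : γl < 0)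
    (hu : u = x * t) (hyu : y + u ≤ 0) (hzx : z + x ≤ 1)
    (hyz1 : y ≤ βu * z) (hyz2 : βl * z ≤ y) (hz : 0 ≤ z)
    (hx0 : 0 ≤ x) (hx1 : x ≤ 1) (ht1 : γl ≤ t) (ht2 : t ≤ γu) :
    βu * (γu * x - u) + hfun γl γu y (u - γl * x) ≤ βu * (γu - t) := by
  unfold hfun
  by_cases hy : y ≤ 0
  · simp only [hy, if_pos]
    nlinarith [mul_nonneg (sub_nonneg.mpr ht2) (sub_nonneg.mpr hx1)]
  · simp only [hy, if_neg, if_false]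
    push_neg at hy
    set v : ℝ := u - γl * x with hvdef
    have hv : 0 ≤ v := by
      have : v = x * (t - γl) := by rw [hvdef, hu]; ring
      rw [this]; exact mul_nonneg hx0 (sub_nonneg.mpr ht1)
    have hyv : 0 < y + v := by linarith
    -- bound the division term
    have hkey : γl * (y * v) ≤ y * (γl - t) * (y + v) := by
      have hyu' : y + x * t ≤ 0 := by rw [← hu]; exact hyu
      rw [hvdef, hu]
      nlinarith [mul_nonneg hy.le (mul_nonneg (sub_nonneg.mpr ht1) (neg_nonneg.mpr hyu'))]
    have hdiv : γl * (y * v / (y + v)) ≤ y * (γl - t) := by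
      rw [mul_div_assoc']
      exact (div_le_iff₀ hyv).mpr hkey
    have hbx : y ≤ βu * (1 - x) := by nlinarith
    nlinarith [mul_nonneg (sub_nonneg.mpr (hbx)) (sub_nonneg.mpr ht2)]
end

section
/- Assume γl < 0 ≤ γu. Then the function h is convex on the set ℝ × [0, ∞), i.e., for all points p₁ = (y₁, v₁) and p₂ = (y₂, v₂) with v₁ ≥ 0 and v₂ ≥ 0 and all λ ∈ [0, 1], one has h(λ·p₁ + (1−λ)·p₂) ≤ λ·h(p₁) + (1−λ)·h(p₂). -/
lemma hfun_nonneg (γl γu : ℝ) (hγl : γl < 0) (hγu : 0 ≤ γu)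
    (y v : ℝ) (hv : 0 ≤ v) : 0 ≤ hfun γl γu y v := by
  unfold hfun
  split_ifs with hy
  · exact le_refl 0
  · push_neg at hy
    have hyv : 0 < y + v := by linarith
    have h1 : y * v / (y + v) ≤ y := by
      rw [div_le_iff₀ hyv]; nlinarith [sq_nonneg y]
    have h2 : γl * y ≤ γl * (y * v / (y + v)) :=
      mul_le_mul_of_nonpos_left h1 hγl.le
    nlinarith

lemma hfun_ge_affine (γl γu : ℝ) (hγl : γl < 0) (hγu : 0 ≤ γu)
    (y v t : ℝ) (hv : 0 ≤ v) (ht0 : 0 ≤ t) (ht1 : t ≤ 1) :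
    (γu - γl) * y + γl * (t^2 * y + (1 - t)^2 * v) ≤ hfun γl γu y v := by
  unfold hfun
  split_ifs with hy
  · have h1t : 0 ≤ 1 - t ^ 2 := by nlinarith
    have hc : 0 ≤ γu - γl + γl * t ^ 2 := by
      nlinarith [mul_nonneg (neg_nonneg.mpr hγl.le) h1t]
    have he := mul_nonpos_of_nonneg_of_nonpos hc hy
    have hd : γl * ((1 - t) ^ 2 * v) ≤ 0 :=
      mul_nonpos_of_nonpos_of_nonneg hγl.le (by positivity)
    nlinarith [he, hd]
  · push_neg at hy
    have hyv : 0 < y + v := by linarith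
    have h1 : y * v / (y + v) ≤ t^2 * y + (1 - t)^2 * v := by
      rw [div_le_iff₀ hyv]
      nlinarith [sq_nonneg (t * y - (1 - t) * v)]
    have h2 : γl * (t^2 * y + (1 - t)^2 * v) ≤ γl * (y * v / (y + v)) :=
      mul_le_mul_of_nonpos_left h1 hγl.le
    linarith

theorem stmt4 (γl γu : ℝ) (hγl : γl < 0) (hγu : 0 ≤ γu)
    (y₁ v₁ y₂ v₂ : ℝ) (hv₁ : 0 ≤ v₁) (hv₂ : 0 ≤ v₂)
    (l : ℝ) (hl0 : 0 ≤ l) (hl1 : l ≤ 1) :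
    hfun γl γu (l * y₁ + (1 - l) * y₂) (l * v₁ + (1 - l) * v₂) ≤
      l * hfun γl γu y₁ v₁ + (1 - l) * hfun γl γu y₂ v₂ := by
  set y := l * y₁ + (1 - l) * y₂ with hy_def
  set v := l * v₁ + (1 - l) * v₂ with hv_def
  have hl1' : 0 ≤ 1 - l := by linarith
  have hv : 0 ≤ v := by positivity
  have h1 := hfun_nonneg γl γu hγl hγu y₁ v₁ hv₁
  have h2 := hfun_nonneg γl γu hγl hγu y₂ v₂ hv₂
  by_cases hy : y ≤ 0
  · have : hfun γl γu y v = 0 := by unfold hfun; simp [hy]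
    rw [this]
    have := mul_nonneg hl0 h1
    have := mul_nonneg hl1' h2
    linarith
  · push_neg at hy
    have hyv : 0 < y + v := by linarith
    set t := v / (y + v) with ht_def
    have ht0 : 0 ≤ t := div_nonneg hv hyv.le
    have ht1 : t ≤ 1 := by
      rw [div_le_one hyv]; linarith
    have key : hfun γl γu y v =
        (γu - γl) * y + γl * (t^2 * y + (1 - t)^2 * v) := by
      unfold hfun
      rw [if_neg (not_le.mpr hy)]
      have : t^2 * y + (1 - t)^2 * v = y * v / (y + v) := by
        rw [ht_def]
        field_simp
        ring
      rw [this]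
    rw [key]
    have ha1 := hfun_ge_affine γl γu hγl hγu y₁ v₁ t hv₁ ht0 ht1
    have ha2 := hfun_ge_affine γl γu hγl hγu y₂ v₂ t hv₂ ht0 ht1
    have hb1 : l * ((γu - γl) * y₁ + γl * (t^2 * y₁ + (1 - t)^2 * v₁)) ≤
        l * hfun γl γu y₁ v₁ := mul_le_mul_of_nonneg_left ha1 hl0
    have hb2 : (1 - l) * ((γu - γl) * y₂ + γl * (t^2 * y₂ + (1 - t)^2 * v₂)) ≤
        (1 - l) * hfun γl γu y₂ v₂ := mul_le_mul_of_nonneg_left ha2 hl1'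
    have : (γu - γl) * y + γl * (t^2 * y + (1 - t)^2 * v) =
        l * ((γu - γl) * y₁ + γl * (t^2 * y₁ + (1 - t)^2 * v₁)) +
        (1 - l) * ((γu - γl) * y₂ + γl * (t^2 * y₂ + (1 - t)^2 * v₂)) := by
      rw [hy_def, hv_def]; ring
    linarith
end

section
/- Assume βu > 0. Then every point (x, u, y, z, t) of T satisfies the inequality (γu − γl)·y + γl·(γu·x − u) + βu·(u − γl·x) ≤ βu·(t − γl). -/
theorem stmt6 (βl βu γl γu x u y z t : ℝ) (hβu : 0 < βu)
    (hu : u = x * t) (hyu : y + u ≤ 0) (hzx : z + x ≤ 1)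
    (hyz1 : y ≤ βu * z) (hyz2 : βl * z ≤ y) (hz : 0 ≤ z)
    (hx0 : 0 ≤ x) (hx1 : x ≤ 1) (ht1 : γl ≤ t) (ht2 : t ≤ γu) :
    (γu - γl) * y + γl * (γu * x - u) + βu * (u - γl * x) ≤ βu * (t - γl) := by
  subst hu
  nlinarith [mul_nonneg (sub_nonneg.2 ht1) (by nlinarith : (0:ℝ) ≤ βu * (1 - x) - y),
    mul_nonneg (sub_nonneg.2 ht2) (by nlinarith : (0:ℝ) ≤ -y - x * t),
    mul_nonneg (mul_nonneg hx0 (sub_nonneg.2 ht2)) (sub_nonneg.2 ht1)]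
end

section
/- Assume βl < 0. Then every point (x, u, y, z, t) of T satisfies the inequality (γl − βl)·(γu·x − u) ≤ −βl·(γu − t). -/
theorem stmt7 (βl βu γl γu x u y z t : ℝ) (hβl : βl < 0)
    (hu : u = x * t) (hyu : y + u ≤ 0) (hzx : z + x ≤ 1)
    (hyz1 : y ≤ βu * z) (hyz2 : βl * z ≤ y) (hz : 0 ≤ z)
    (hx0 : 0 ≤ x) (hx1 : x ≤ 1) (ht1 : γl ≤ t) (ht2 : t ≤ γu) :
    (γl - βl) * (γu * x - u) ≤ -βl * (γu - t) := by
  have h1 : x * t ≤ -βl * (1 - x) := by nlinarith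
  have h2 : γl * x + βl * (1 - x) ≤ 0 := by nlinarith [mul_le_mul_of_nonneg_left ht1 hx0]
  subst hu
  nlinarith [mul_nonpos_of_nonneg_of_nonpos (sub_nonneg.2 ht2) h2]
end

section
/- Assume γl < γu < 0 and βl < 0 < βu. Then the convex hull of T equals R², i.e., conv(T) = R². -/
def memT (βl βu γl γu x u y z t : ℝ) : Prop :=
  u = x * t ∧ y + u ≤ 0 ∧ z + x ≤ 1 ∧ y ≤ βu * z ∧ βl * z ≤ y ∧
    0 ≤ z ∧ 0 ≤ x ∧ x ≤ 1 ∧ γl ≤ t ∧ t ≤ γu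

def setT (βl βu γl γu : ℝ) : Set (ℝ × ℝ × ℝ × ℝ × ℝ) :=
  {p | memT βl βu γl γu p.1 p.2.1 p.2.2.1 p.2.2.2.1 p.2.2.2.2}

def memR0 (βl βu γl γu x u y z t : ℝ) : Prop :=
  y + u ≤ 0 ∧ z + x ≤ 1 ∧ y ≤ βu * z ∧ βl * z ≤ y ∧
    0 ≤ u - γl * x ∧ 0 ≤ γu * x - u ∧
    u - γl * x ≤ t - γl ∧ γu * x - u ≤ γu - t

noncomputable def memR1 (βl βu γl γu x u y z t : ℝ) : Prop :=
  memR0 βl βu γl γu x u y z t ∧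
    (u - βl * x) * (u - γl * x) ≤ -βl * x * (t - γl) ∧
    (0 < y →
      (γu - γl) * y + βu * (γu * x - u) + γl * y * (u - γl * x) / (y + u - γl * x) ≤
        βu * (γu - t))

noncomputable def setR1 (βl βu γl γu : ℝ) : Set (ℝ × ℝ × ℝ × ℝ × ℝ) :=
  {p | memR1 βl βu γl γu p.1 p.2.1 p.2.2.1 p.2.2.2.1 p.2.2.2.2}

noncomputable def memR2 (βl βu γl γu x u y z t : ℝ) : Prop :=
  memR0 βl βu γl γu x u y z t ∧
    (γu - γl) * y + γl * (γu * x - u) + βu * (u - γl * x) ≤ βu * (t - γl) ∧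
    (0 < y →
      (γu - γl) * y + βu * (γu * x - u) + γl * y * (u - γl * x) / (y + u - γl * x) ≤
        βu * (γu - t))

noncomputable def setR2 (βl βu γl γu : ℝ) : Set (ℝ × ℝ × ℝ × ℝ × ℝ) :=
  {p | memR2 βl βu γl γu p.1 p.2.1 p.2.2.1 p.2.2.2.1 p.2.2.2.2}

def memR3 (βl βu γl γu x u y z t : ℝ) : Prop :=
  memR0 βl βu γl γu x u y z t ∧
    (u - βl * x) * (u - γl * x) ≤ -βl * x * (t - γl) ∧
    (γl - βl) * (γu * x - u) ≤ -βl * (γu - t)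

def setR3 (βl βu γl γu : ℝ) : Set (ℝ × ℝ × ℝ × ℝ × ℝ) :=
  {p | memR3 βl βu γl γu p.1 p.2.1 p.2.2.1 p.2.2.2.1 p.2.2.2.2}

/-!
`T ⊆ R²` is a direct check, and `R²` is convex: its only non-linear constraint reads
`(γu - γl) y + γl P(y, b) ≤ e` with `b = u - γl x`, `e = βu (γu - t) - βu (γu x - u)` and the
parallel sum `P(y, b) = y b / (y + b)`, which is concave as a minimum of linear functions; it is
imposed only for `y > 0`, and a segment crossing `y = 0` is handled through its point with `y = 0`.

Conversely, let `p ∈ R²` with `γl < t < γu`. If `y ≤ 0`, or if the cut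
`(γu - γl) y + βu (γu x - u) + γu (u - γl x) ≤ βu (γu - t)` holds, `p` splits into two points of `T`
with `t = γl` and `t = γu`: the McCormick masses `γu - t`, `t - γl` carry the `x`-masses
`γu x - u`, `u - γl x`, and `y`, `z` can be distributed between them. Otherwise, since raising `z`
towards `1 - x` is an affine map of `T` into itself, we may take `z = y / βu`, and `p` is a convex
combination of points `(0, 0, 0, 0, s)`, `(1, γl, 0, 0, γl)` and one or two points of the edge
`y = -u = βu z = βu (1 - x)` of `T`; the fractional constraint of `R²` is what makes the weights
nonnegative.
-/

open Set

section ConvexHull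

variable {E : Type*} [AddCommGroup E] [Module ℝ E] {s : Set E}

theorem mem_convexHull_of_eq_add_four {p q₀ q₁ q₂ q₃ : E} {w₀ w₁ w₂ w₃ : ℝ}
    (h₀ : 0 ≤ w₀) (h₁ : 0 ≤ w₁) (h₂ : 0 ≤ w₂) (h₃ : 0 ≤ w₃) (hw : w₀ + w₁ + w₂ + w₃ = 1)
    (hq₀ : q₀ ∈ s) (hq₁ : q₁ ∈ s) (hq₂ : q₂ ∈ s) (hq₃ : q₃ ∈ s)
    (hp : p = w₀ • q₀ + w₁ • q₁ + w₂ • q₂ + w₃ • q₃) : p ∈ convexHull ℝ s := by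
  have := (convex_convexHull ℝ s).sum_mem (t := Finset.univ) (w := ![w₀, w₁, w₂, w₃])
    (z := ![q₀, q₁, q₂, q₃]) (fun i _ => by fin_cases i <;> assumption)
    (by simpa [Fin.sum_univ_four] using hw)
    (fun i _ => by fin_cases i <;> exact subset_convexHull ℝ s (by assumption))
  simpa [Fin.sum_univ_four, ← hp] using this

end ConvexHull

theorem exists_mem_Icc_add_eq {l₁ h₁ l₂ h₂ c : ℝ} (h₁₁ : l₁ ≤ h₁) (h₂₂ : l₂ ≤ h₂)
    (hl : l₁ + l₂ ≤ c) (hh : c ≤ h₁ + h₂) :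
    ∃ a ∈ Icc l₁ h₁, ∃ b ∈ Icc l₂ h₂, a + b = c := by
  have hmin : c - h₂ ≤ min h₁ (c - l₂) := le_min (by linarith) (by linarith)
  exact ⟨min h₁ (c - l₂), ⟨le_min h₁₁ (by linarith), min_le_left _ _⟩, c - min h₁ (c - l₂),
    ⟨by linarith [min_le_right h₁ (c - l₂)], by linarith⟩, by ring⟩

noncomputable def parallelSum (y b : ℝ) : ℝ := y * b / (y + b)

theorem parallelSum_le {y b : ℝ} (hy : 0 ≤ y) (hb : 0 ≤ b) (s : ℝ) :
    parallelSum y b ≤ s ^ 2 * b + (1 - s) ^ 2 * y := by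
  rcases (add_nonneg hy hb).eq_or_lt with h | h
  · rw [parallelSum, ← h, div_zero]
    positivity
  · rw [parallelSum, div_le_iff₀ h]
    nlinarith [sq_nonneg (s * b - (1 - s) * y)]

theorem parallelSum_eq {y b : ℝ} (hy : 0 ≤ y) (hb : 0 ≤ b) :
    parallelSum y b = (y / (y + b)) ^ 2 * b + (1 - y / (y + b)) ^ 2 * y := by
  rcases (add_nonneg hy hb).eq_or_lt with h | h
  · obtain rfl : y = 0 := by linarith
    simp [parallelSum]
  · rw [parallelSum]
    field_simp
    ring

/-- `parallelSum y b` is the minimum over `s` of the linear functions `s² b + (1 - s)² y`. -/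
theorem concaveOn_parallelSum :
    ConcaveOn ℝ (Ici (0 : ℝ) ×ˢ Ici 0) (fun q : ℝ × ℝ => parallelSum q.1 q.2) := by
  refine ⟨(convex_Ici 0).prod (convex_Ici 0), ?_⟩
  rintro ⟨y₁, b₁⟩ ⟨hy₁, hb₁⟩ ⟨y₂, b₂⟩ ⟨hy₂, hb₂⟩ a c ha hc hac
  simp only [mem_Ici] at hy₁ hb₁ hy₂ hb₂
  simp only [Prod.smul_mk, Prod.mk_add_mk, smul_eq_mul]
  set s := (a * y₁ + c * y₂) / (a * y₁ + c * y₂ + (a * b₁ + c * b₂))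
  calc a * parallelSum y₁ b₁ + c * parallelSum y₂ b₂
      ≤ a * (s ^ 2 * b₁ + (1 - s) ^ 2 * y₁) + c * (s ^ 2 * b₂ + (1 - s) ^ 2 * y₂) := by
        gcongr <;> exact parallelSum_le ‹_› ‹_› s
    _ = s ^ 2 * (a * b₁ + c * b₂) + (1 - s) ^ 2 * (a * y₁ + c * y₂) := by ring
    _ = parallelSum (a * y₁ + c * y₂) (a * b₁ + c * b₂) :=
        (parallelSum_eq (by positivity) (by positivity)).symm

/-- The fractional constraint of `R²` in the coordinates
`(y, u - γl x, βu (γu - t) - βu (γu x - u))`. -/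
def fracSet (γl γu : ℝ) : Set (ℝ × ℝ × ℝ) :=
  {q | 0 ≤ q.2.1 ∧ 0 ≤ q.2.2 ∧
    (0 < q.1 → (γu - γl) * q.1 + γl * parallelSum q.1 q.2.1 ≤ q.2.2)}

section fracSet

variable {γl γu : ℝ}

theorem fracSet_ineq {q : ℝ × ℝ × ℝ} (hq : q ∈ fracSet γl γu) (hy : 0 ≤ q.1) :
    (γu - γl) * q.1 + γl * parallelSum q.1 q.2.1 ≤ q.2.2 := by
  rcases hy.eq_or_lt with h | h
  · simpa [← h, parallelSum] using hq.2.1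
  · exact hq.2.2 h

theorem convex_fracSet_inter_nonneg (hγl : γl < 0) :
    Convex ℝ (fracSet γl γu ∩ {q | 0 ≤ q.1}) := by
  rintro ⟨y₁, b₁, e₁⟩ ⟨hq₁, hy₁ : 0 ≤ y₁⟩ ⟨y₂, b₂, e₂⟩ ⟨hq₂, hy₂ : 0 ≤ y₂⟩ a c ha hc hac
  have hF₁ := fracSet_ineq hq₁ hy₁
  have hF₂ := fracSet_ineq hq₂ hy₂
  have hconc := concaveOn_parallelSum.2 (x := (y₁, b₁)) (y := (y₂, b₂))
    ⟨hy₁, hq₁.1⟩ ⟨hy₂, hq₂.1⟩ ha hc hac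
  obtain ⟨hb₁, he₁, -⟩ := hq₁
  obtain ⟨hb₂, he₂, -⟩ := hq₂
  simp only [Prod.smul_mk, Prod.mk_add_mk, smul_eq_mul] at hF₁ hF₂ hconc ⊢
  refine ⟨⟨by positivity, by positivity, fun _ => ?_⟩, show 0 ≤ a * y₁ + c * y₂ by positivity⟩
  nlinarith [mul_le_mul_of_nonpos_left hconc hγl.le]

theorem convex_fracSet (hγl : γl < 0) : Convex ℝ (fracSet γl γu) := by
  rintro ⟨y₁, b₁, e₁⟩ hq₁ ⟨y₂, b₂, e₂⟩ hq₂ a c ha hc hac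
  wlog hle : y₁ ≤ y₂ generalizing y₁ b₁ e₁ y₂ b₂ e₂ a c
  · rw [add_comm]
    exact this y₂ b₂ e₂ hq₂ y₁ b₁ e₁ hq₁ hc ha (by linarith) (by linarith)
  rcases le_or_gt 0 y₁ with hy₁ | hy₁
  · exact (convex_fracSet_inter_nonneg hγl ⟨hq₁, hy₁⟩
      ⟨hq₂, show 0 ≤ y₂ by linarith⟩ ha hc hac).1
  obtain ⟨hb₁, he₁, -⟩ : 0 ≤ b₁ ∧ 0 ≤ e₁ ∧ _ := hq₁
  obtain ⟨hb₂, he₂, hF₂⟩ : 0 ≤ b₂ ∧ 0 ≤ e₂ ∧ _ := hq₂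
  simp only [Prod.smul_mk, Prod.mk_add_mk, smul_eq_mul]
  refine ⟨by positivity, by positivity, fun hy => ?_⟩
  -- the combination lies between `(y₂, b₂, e₂)` and the point of the segment with `y = 0`
  have hy₂ : 0 < y₂ := by nlinarith
  have hd : 0 < y₂ - y₁ := by linarith
  set α := y₂ / (y₂ - y₁)
  set β := -y₁ / (y₂ - y₁)
  set ν := a * (y₂ - y₁) / y₂
  have hα : 0 ≤ α := by positivity
  have hβ : 0 ≤ β := div_nonneg (by linarith) hd.le
  have hν₀ : 0 ≤ ν := div_nonneg (by nlinarith) hy₂.le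
  have hν : ν ≤ 1 := by
    rw [div_le_one hy₂]
    nlinarith
  have hq₀ : ((0 : ℝ), α * b₁ + β * b₂, α * e₁ + β * e₂) ∈ fracSet γl γu ∩ {q | 0 ≤ q.1} :=
    ⟨⟨by positivity, by positivity, fun h => absurd h (lt_irrefl 0)⟩, le_refl (0 : ℝ)⟩
  have hcombo : ((a * y₁ + c * y₂, a * b₁ + c * b₂, a * e₁ + c * e₂) : ℝ × ℝ × ℝ) =
      ν • ((0 : ℝ), α * b₁ + β * b₂, α * e₁ + β * e₂) + (1 - ν) • (y₂, b₂, e₂) := by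
    obtain rfl : c = 1 - a := by linarith
    simp only [Prod.smul_mk, Prod.mk_add_mk, smul_eq_mul, Prod.mk.injEq, α, β, ν]
    refine ⟨?_, ?_, ?_⟩ <;> field_simp <;> ring
  have := (convex_fracSet_inter_nonneg hγl hq₀ ⟨⟨hb₂, he₂, hF₂⟩, hy₂.le⟩
    hν₀ (by linarith : 0 ≤ 1 - ν) (by ring : ν + (1 - ν) = 1)).1
  rw [← hcombo] at this
  exact this.2.2 hy

end fracSet

section Relaxation

variable {βl βu γl γu x u y z t : ℝ}

theorem memR0_bounds (hγ : γl < γu) (hβ : βl < βu) (h : memR0 βl βu γl γu x u y z t) :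
    0 ≤ x ∧ x ≤ 1 ∧ γl ≤ t ∧ t ≤ γu ∧ 0 ≤ z := by
  obtain ⟨-, -, h₃, h₄, h₅, h₆, h₇, h₈⟩ := h
  exact ⟨by nlinarith, by nlinarith, by linarith, by linarith, by nlinarith⟩

theorem memT_of_memR0_of_endpoint (hγ : γl < γu) (hβ : βl < βu)
    (h : memR0 βl βu γl γu x u y z t) (ht : t = γl ∨ t = γu) : memT βl βu γl γu x u y z t := by
  obtain ⟨hx₀, hx₁, htl, htu, hz⟩ := memR0_bounds hγ hβ h
  obtain ⟨h₁, h₂, h₃, h₄, h₅, h₆, h₇, h₈⟩ := h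
  have hu : u = x * t := by rcases ht with rfl | rfl <;> linarith
  exact ⟨hu, h₁, h₂, h₃, h₄, hz, hx₀, hx₁, htl, htu⟩

theorem memR2_frac_iff :
    (γu - γl) * y + βu * (γu * x - u) + γl * y * (u - γl * x) / (y + u - γl * x) ≤
        βu * (γu - t) ↔
      (γu - γl) * y + γl * parallelSum y (u - γl * x) ≤ βu * (γu - t) - βu * (γu * x - u) := by
  have : γl * y * (u - γl * x) / (y + u - γl * x) = γl * parallelSum y (u - γl * x) := by
    rw [parallelSum]
    ring
  constructor <;> intro h <;> linarith

theorem memR2_iff (hβu : 0 ≤ βu) :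
    memR2 βl βu γl γu x u y z t ↔ memR0 βl βu γl γu x u y z t ∧
      (γu - γl) * y + γl * (γu * x - u) + βu * (u - γl * x) ≤ βu * (t - γl) ∧
      (y, u - γl * x, βu * (γu - t) - βu * (γu * x - u)) ∈ fracSet γl γu := by
  constructor
  · rintro ⟨h, hlin, hfrac⟩
    exact ⟨h, hlin, h.2.2.2.2.1, by nlinarith [h.2.2.2.2.2.2.2],
      fun hy => memR2_frac_iff.1 (hfrac hy)⟩
  · rintro ⟨h, hlin, -, -, hfrac⟩
    exact ⟨h, hlin, fun hy => memR2_frac_iff.2 (hfrac hy)⟩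

theorem setT_subset_setR2 (hβu : 0 < βu) :
    setT βl βu γl γu ⊆ setR2 βl βu γl γu := by
  rintro ⟨x, u, y, z, t⟩ hm
  obtain ⟨rfl, h₁, h₂, h₃, h₄, hz, hx₀, hx₁, htl, htu⟩ : memT βl βu γl γu x u y z t := hm
  have htl' : 0 ≤ t - γl := by linarith
  have htu' : 0 ≤ γu - t := by linarith
  have hyx : y ≤ βu * (1 - x) := by nlinarith
  show memR2 βl βu γl γu x (x * t) y z t
  refine (memR2_iff hβu.le).2 ⟨⟨h₁, h₂, h₃, h₄, by nlinarith, by nlinarith, by nlinarith,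
    by nlinarith⟩, ?_, show 0 ≤ x * t - γl * x by nlinarith,
    show 0 ≤ βu * (γu - t) - βu * (γu * x - x * t) by
      nlinarith [mul_nonneg (mul_nonneg hβu.le htu') (sub_nonneg.2 hx₁)], fun hy => ?_⟩
  · nlinarith [mul_nonneg htl' (sub_nonneg.2 hyx), mul_nonpos_of_nonneg_of_nonpos htu' h₁,
      mul_nonneg (mul_nonneg htu' hx₀) htl']
  have hb : 0 ≤ x * t - γl * x := by nlinarith
  have hyb : 0 < y + (x * t - γl * x) := by linarith
  calc (γu - γl) * y + γl * parallelSum y (x * t - γl * x) ≤ (γu - t) * y := by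
        rw [← sub_nonneg, parallelSum,
          show (γu - t) * y - ((γu - γl) * y + γl * (y * (x * t - γl * x) / (y + (x * t - γl * x))))
            = y * ((t - γl) * -(y + x * t)) / (y + (x * t - γl * x)) by field_simp; ring]
        exact div_nonneg (mul_nonneg hy.le (mul_nonneg htl' (by linarith))) hyb.le
    _ ≤ βu * (γu - t) - βu * (γu * x - x * t) := by nlinarith [mul_le_mul_of_nonneg_left hyx htu']

theorem convex_setR2 (hγl : γl < 0) (hβu : 0 ≤ βu) : Convex ℝ (setR2 βl βu γl γu) := by
  rintro ⟨x₁, u₁, y₁, z₁, t₁⟩ hp ⟨x₂, u₂, y₂, z₂, t₂⟩ hq a c ha hc hac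
  obtain ⟨⟨p₁, p₂, p₃, p₄, p₅, p₆, p₇, p₈⟩, p₉, pF⟩ :=
    (memR2_iff (x := x₁) (u := u₁) (y := y₁) (z := z₁) (t := t₁) hβu).1 hp
  obtain ⟨⟨q₁, q₂, q₃, q₄, q₅, q₆, q₇, q₈⟩, q₉, qF⟩ :=
    (memR2_iff (x := x₂) (u := u₂) (y := y₂) (z := z₂) (t := t₂) hβu).1 hq
  have hF := convex_fracSet hγl pF qF ha hc hac
  obtain rfl : c = 1 - a := by linarith
  simp only [Prod.smul_mk, Prod.mk_add_mk, smul_eq_mul] at hF ⊢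
  show memR2 βl βu γl γu (a * x₁ + (1 - a) * x₂) (a * u₁ + (1 - a) * u₂) (a * y₁ + (1 - a) * y₂)
    (a * z₁ + (1 - a) * z₂) (a * t₁ + (1 - a) * t₂)
  refine (memR2_iff hβu).2 ⟨⟨?_, ?_, ?_, ?_, ?_, ?_, ?_, ?_⟩, ?_, ?_⟩
  rotate_right
  · convert hF using 3 <;> ring
  all_goals linarith [mul_le_mul_of_nonneg_left p₁ ha, mul_le_mul_of_nonneg_left q₁ hc,
    mul_le_mul_of_nonneg_left p₂ ha, mul_le_mul_of_nonneg_left q₂ hc,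
    mul_le_mul_of_nonneg_left p₃ ha, mul_le_mul_of_nonneg_left q₃ hc,
    mul_le_mul_of_nonneg_left p₄ ha, mul_le_mul_of_nonneg_left q₄ hc,
    mul_le_mul_of_nonneg_left p₅ ha, mul_le_mul_of_nonneg_left q₅ hc,
    mul_le_mul_of_nonneg_left p₆ ha, mul_le_mul_of_nonneg_left q₆ hc,
    mul_le_mul_of_nonneg_left p₇ ha, mul_le_mul_of_nonneg_left q₇ hc,
    mul_le_mul_of_nonneg_left p₈ ha, mul_le_mul_of_nonneg_left q₈ hc,
    mul_le_mul_of_nonneg_left p₉ ha, mul_le_mul_of_nonneg_left q₉ hc]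

end Relaxation

section Hull

variable {βl βu γl γu x u y z t : ℝ}

/-- `(a, s a, y, z, m s) / m ∈ T`, written without division: `(m, a, y, z)` is a mass vector of
the slice `t = s` of `T`. -/
def memTCone (βl βu s m a y z : ℝ) : Prop :=
  y + s * a ≤ 0 ∧ z + a ≤ m ∧ y ≤ βu * z ∧ βl * z ≤ y ∧ 0 ≤ z ∧ 0 ≤ a

theorem memTCone.div_mem_setT {s m a : ℝ} (h : memTCone βl βu s m a y z) (hm : 0 < m)
    (hs : γl ≤ s) (hs' : s ≤ γu) :
    ((a / m, a / m * s, y / m, z / m, s) : ℝ × ℝ × ℝ × ℝ × ℝ) ∈ setT βl βu γl γu := by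
  obtain ⟨h₁, h₂, h₃, h₄, hz, ha⟩ := h
  refine ⟨rfl, ?_, ?_, ?_, ?_, by positivity, by positivity, ?_, hs, hs'⟩
  · rw [show y / m + a / m * s = (y + s * a) / m by ring]
    exact div_nonpos_of_nonpos_of_nonneg h₁ hm.le
  · rw [← add_div, div_le_one hm]
    exact h₂
  · rw [← mul_div_assoc]
    exact div_le_div_of_nonneg_right h₃ hm.le
  · rw [← mul_div_assoc]
    exact div_le_div_of_nonneg_right h₄ hm.le
  · rw [div_le_one hm]
    linarith

theorem mem_convexHull_of_memTCone {m₁ m₂ a₁ a₂ y₁ y₂ z₁ z₂ : ℝ} (hγ : γl ≤ γu)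
    (hm₁ : 0 < m₁) (hm₂ : 0 < m₂)
    (h₁ : memTCone βl βu γl m₁ a₁ y₁ z₁) (h₂ : memTCone βl βu γu m₂ a₂ y₂ z₂)
    (hx : (m₁ + m₂) * x = a₁ + a₂) (hu : (m₁ + m₂) * u = γl * a₁ + γu * a₂)
    (hy : (m₁ + m₂) * y = y₁ + y₂) (hz : (m₁ + m₂) * z = z₁ + z₂)
    (ht : (m₁ + m₂) * t = m₁ * γl + m₂ * γu) :
    ((x, u, y, z, t) : ℝ × ℝ × ℝ × ℝ × ℝ) ∈ convexHull ℝ (setT βl βu γl γu) := by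
  have hm : 0 < m₁ + m₂ := add_pos hm₁ hm₂
  have key := convex_convexHull ℝ (setT βl βu γl γu)
    (subset_convexHull ℝ _ (h₁.div_mem_setT hm₁ le_rfl hγ))
    (subset_convexHull ℝ _ (h₂.div_mem_setT hm₂ hγ le_rfl))
    (div_nonneg hm₁.le hm.le) (div_nonneg hm₂.le hm.le) (by field_simp)
  convert key using 1
  simp only [Prod.smul_mk, Prod.mk_add_mk, smul_eq_mul, Prod.mk.injEq]
  refine ⟨?_, ?_, ?_, ?_, ?_⟩ <;> field_simp <;> linarith

theorem mem_convexHull_of_nonpos (hγ : γl < γu) (hγu : γu < 0) (hβl : βl ≤ 0) (hβu : 0 ≤ βu)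
    (h : memR0 βl βu γl γu x u y z t) (hz : 0 ≤ z) (hy : y ≤ 0) (htl : γl < t) (htu : t < γu) :
    ((x, u, y, z, t) : ℝ × ℝ × ℝ × ℝ × ℝ) ∈ convexHull ℝ (setT βl βu γl γu) := by
  obtain ⟨h₁, h₂, h₃, h₄, h₅, h₆, h₇, h₈⟩ := h
  have hΔ : 0 < γu - γl := by linarith
  have hγl : γl < 0 := hγ.trans hγu
  obtain ⟨z₁, ⟨hz₁, hz₁'⟩, z₂, ⟨hz₂, hz₂'⟩, hz⟩ := exists_mem_Icc_add_eq
    (c := (γu - γl) * z) (sub_nonneg.2 h₈) (sub_nonneg.2 h₇)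
    (by linarith [mul_nonneg hΔ.le hz]) (by linarith [mul_le_mul_of_nonneg_left h₂ hΔ.le])
  have hβz : βl * z₁ + βl * z₂ = βl * ((γu - γl) * z) := by rw [← hz]; ring
  obtain ⟨y₁, ⟨hy₁, hy₁'⟩, y₂, ⟨hy₂, hy₂'⟩, hy⟩ := exists_mem_Icc_add_eq
    (c := (γu - γl) * y) (mul_nonpos_of_nonpos_of_nonneg hβl hz₁)
    (mul_nonpos_of_nonpos_of_nonneg hβl hz₂) (by linarith [mul_le_mul_of_nonneg_left h₄ hΔ.le])
    (by linarith [mul_nonpos_of_nonneg_of_nonpos hΔ.le hy])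
  exact mem_convexHull_of_memTCone hγ.le (m₁ := γu - t) (m₂ := t - γl)
    (sub_pos.2 htu) (sub_pos.2 htl)
    ⟨by linarith [mul_nonpos_of_nonpos_of_nonneg hγl.le h₆], by linarith,
      by linarith [mul_nonneg hβu hz₁], hy₁, hz₁, h₆⟩
    ⟨by linarith [mul_nonpos_of_nonpos_of_nonneg hγu.le h₅], by linarith,
      by linarith [mul_nonneg hβu hz₂], hy₂, hz₂, h₅⟩
    (by ring) (by ring) (by linarith) (by linarith) (by ring)

theorem mem_convexHull_of_pos (hγ : γl < γu) (hγu : γu < 0) (hβl : βl ≤ 0) (hβu : 0 < βu)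
    (h : memR0 βl βu γl γu x u y z t) (hy : 0 < y) (htl : γl < t) (htu : t < γu)
    (hlin : (γu - γl) * y + γl * (γu * x - u) + βu * (u - γl * x) ≤ βu * (t - γl))
    (hcut : (γu - γl) * y + βu * (γu * x - u) + γu * (u - γl * x) ≤ βu * (γu - t)) :
    ((x, u, y, z, t) : ℝ × ℝ × ℝ × ℝ × ℝ) ∈ convexHull ℝ (setT βl βu γl γu) := by
  obtain ⟨h₁, h₂, h₃, h₄, h₅, h₆, h₇, h₈⟩ := h
  have hΔ : 0 < γu - γl := by linarith
  set g₁ := min (-γl * (γu * x - u)) (βu * ((γu - t) - (γu * x - u)))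
  set g₂ := min (-γu * (u - γl * x)) (βu * ((t - γl) - (u - γl * x)))
  have hγl : γl < 0 := hγ.trans hγu
  have hyx : y ≤ βu * (1 - x) := by nlinarith
  have hg₁ : 0 ≤ g₁ :=
    le_min (mul_nonneg (by linarith) h₆) (mul_nonneg hβu.le (sub_nonneg.2 h₈))
  have hg₂ : 0 ≤ g₂ :=
    le_min (mul_nonneg (by linarith) h₅) (mul_nonneg hβu.le (sub_nonneg.2 h₇))
  have hg₁l : g₁ ≤ -γl * (γu * x - u) := min_le_left _ _
  have hg₁r : g₁ ≤ βu * ((γu - t) - (γu * x - u)) := min_le_right _ _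
  have hg₂l : g₂ ≤ -γu * (u - γl * x) := min_le_left _ _
  have hg₂r : g₂ ≤ βu * ((t - γl) - (u - γl * x)) := min_le_right _ _
  have hg : (γu - γl) * y ≤ g₁ + g₂ := by
    obtain e₁ | e₁ : g₁ = -γl * (γu * x - u) ∨ g₁ = βu * ((γu - t) - (γu * x - u)) :=
      min_choice _ _ <;>
    obtain e₂ | e₂ : g₂ = -γu * (u - γl * x) ∨ g₂ = βu * ((t - γl) - (u - γl * x)) :=
      min_choice _ _ <;>
    rw [e₁, e₂] <;>
    linarith [mul_le_mul_of_nonneg_left h₁ hΔ.le, mul_le_mul_of_nonneg_left hyx hΔ.le]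
  obtain ⟨y₁, ⟨hy₁, hy₁'⟩, y₂, ⟨hy₂, hy₂'⟩, hy⟩ := exists_mem_Icc_add_eq
    (c := (γu - γl) * y) hg₁ hg₂ (by nlinarith) hg
  have hy₁β : y₁ / βu ≤ (γu - t) - (γu * x - u) := (div_le_iff₀ hβu).2 (by linarith)
  have hy₂β : y₂ / βu ≤ (t - γl) - (u - γl * x) := (div_le_iff₀ hβu).2 (by linarith)
  obtain ⟨z₁, ⟨hz₁, hz₁'⟩, z₂, ⟨hz₂, hz₂'⟩, hz⟩ := exists_mem_Icc_add_eq
    (c := (γu - γl) * z) hy₁β hy₂β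
    (by rw [← add_div, hy, div_le_iff₀ hβu]; linarith [mul_le_mul_of_nonneg_left h₃ hΔ.le])
    (by linarith [mul_le_mul_of_nonneg_left h₂ hΔ.le])
  have hz₁₀ : 0 ≤ z₁ := le_trans (by positivity) hz₁
  have hz₂₀ : 0 ≤ z₂ := le_trans (by positivity) hz₂
  exact mem_convexHull_of_memTCone hγ.le (m₁ := γu - t) (m₂ := t - γl)
    (sub_pos.2 htu) (sub_pos.2 htl)
    ⟨by linarith, by linarith, (div_le_iff₀' hβu).1 hz₁,
      by linarith [mul_nonpos_of_nonpos_of_nonneg hβl hz₁₀], hz₁₀, h₆⟩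
    ⟨by linarith, by linarith, (div_le_iff₀' hβu).1 hz₂,
      by linarith [mul_nonpos_of_nonpos_of_nonneg hβl hz₂₀], hz₂₀, h₅⟩
    (by ring) (by ring) (by linarith) (by linarith) (by ring)

end Hull

section Face

variable {βl βu γl γu x u y z t : ℝ}

theorem mem_setT_of_yz_eq_zero {s : ℝ} (hx₀ : 0 ≤ x) (hx₁ : x ≤ 1) (hs : γl ≤ s) (hs' : s ≤ γu)
    (hs₀ : s ≤ 0) : ((x, x * s, 0, 0, s) : ℝ × ℝ × ℝ × ℝ × ℝ) ∈ setT βl βu γl γu :=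
  ⟨rfl, by nlinarith, by linarith, by simp, by simp, le_rfl, hx₀, hx₁, hs, hs'⟩

/-- The point of the edge `y = -u = βu z`, `x + z = 1` of `T` with `x = P / S`. -/
noncomputable def kinkPt (βu P S : ℝ) : ℝ × ℝ × ℝ × ℝ × ℝ :=
  (P / S, -(βu * (S - P) / S), βu * (S - P) / S, (S - P) / S, -(βu * (S - P) / P))

theorem kinkPt_mem_setT {P S : ℝ} (hβl : βl ≤ 0) (hβu : 0 ≤ βu) (hP : 0 < P) (hPS : P ≤ S)
    (hs : γl ≤ -(βu * (S - P) / P)) (hs' : -(βu * (S - P) / P) ≤ γu) :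
    kinkPt βu P S ∈ setT βl βu γl γu := by
  have hS : 0 < S := by linarith
  have hz : 0 ≤ (S - P) / S := div_nonneg (sub_nonneg.2 hPS) hS.le
  show memT βl βu γl γu (P / S) (-(βu * (S - P) / S)) (βu * (S - P) / S) ((S - P) / S)
    (-(βu * (S - P) / P))
  refine ⟨?_, by simp, ?_, le_of_eq (mul_div_assoc _ _ _), ?_, hz, by positivity,
    (div_le_one hS).2 hPS, hs, hs'⟩
  · field_simp
  · rw [← add_div, sub_add_cancel, div_self hS.ne']
  · rw [mul_div_assoc]
    exact (mul_nonpos_of_nonpos_of_nonneg hβl hz).trans (mul_nonneg hβu hz)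

theorem face_mem_convexHull_one_kink {b : ℝ} (hγ : γl < γu) (hγu : γu < 0) (hβl : βl ≤ 0)
    (hβu : 0 < βu) (hbu : u - γl * x = b) (hy : 0 < y) (hb : 0 ≤ b) (h₁ : y + u ≤ 0)
    (hkink : 0 ≤ (γu - γl) * y + γu * b)
    (hL : βu * b * (y + b) - γl * b * y ≤ βu * (t - γl) * (y + b))
    (hR : ((γu - γl) * y + βu * (γu * x - u)) * (y + b) + γl * y * b ≤
      βu * (γu - t) * (y + b)) :
    ((x, u, y, y / βu, t) : ℝ × ℝ × ℝ × ℝ × ℝ) ∈ convexHull ℝ (setT βl βu γl γu) := by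
  obtain rfl : u = b + γl * x := by linarith
  have hγl : γl < 0 := hγ.trans hγu
  have hΔ : 0 < γu - γl := by linarith
  have hY : 0 < y + b := by linarith
  have hγl₀ : γl ≠ 0 := hγl.ne
  have hβu₀ : βu ≠ 0 := hβu.ne'
  have hΔ₀ : γu - γl ≠ 0 := hΔ.ne'
  have hY₀ : y + b ≠ 0 := hY.ne'
  have hW : 0 < βu * (y + b) - γl * y := by nlinarith
  -- stated in the normal form that `field_simp` produces
  have hW₀ : βu * (y + b) - y * γl ≠ 0 := by rw [mul_comm y]; exact hW.ne'
  have hkt : -(βu * (βu * (y + b) - γl * y - βu * (y + b)) / (βu * (y + b))) =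
      γl * y / (y + b) := by
    field_simp
    ring
  set μk := (βu * (y + b) - γl * y) / (-γl * βu)
  set μe := (y + (b + γl * x)) / γl
  set μ₀ := 1 - x - y / βu
  -- the `t`-mass left to the points `(0, 0, 0, 0, γl)` and `(0, 0, 0, 0, γu)` of total weight `μ₀`
  set τ := t - μk * (γl * y / (y + b)) - μe * γl
  have hτl : μ₀ * γl ≤ τ := by
    rw [← sub_nonneg, show τ - μ₀ * γl = (βu * (t - γl) * (y + b) - (βu * (y + b) - γl * y) * b)
      / (βu * (y + b)) by simp only [τ, μk, μe, μ₀]; field_simp; ring]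
    exact div_nonneg (by linarith) (by positivity)
  have hτu : τ ≤ μ₀ * γu := by
    rw [← sub_nonneg, show μ₀ * γu - τ = (βu * (γu - t) * (y + b) -
      ((γu - γl) * y + βu * (γu * x - (b + γl * x))) * (y + b) - γl * y * b) / (βu * (y + b)) by
        simp only [τ, μk, μe, μ₀]; field_simp; ring]
    exact div_nonneg (by linarith) (by positivity)
  refine mem_convexHull_of_eq_add_four (w₀ := (μ₀ * γu - τ) / (γu - γl))
    (w₁ := (τ - μ₀ * γl) / (γu - γl)) (w₂ := μk) (w₃ := μe)
    (q₀ := (0, 0 * γl, 0, 0, γl)) (q₁ := (0, 0 * γu, 0, 0, γu))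
    (q₂ := kinkPt βu (βu * (y + b)) (βu * (y + b) - γl * y)) (q₃ := (1, 1 * γl, 0, 0, γl))
    (div_nonneg (by linarith) hΔ.le) (div_nonneg (by linarith) hΔ.le)
    (div_nonneg hW.le (mul_pos (neg_pos.2 hγl) hβu).le) (div_nonneg_of_nonpos h₁ hγl.le) ?_
    (mem_setT_of_yz_eq_zero le_rfl zero_le_one le_rfl hγ.le hγl.le)
    (mem_setT_of_yz_eq_zero le_rfl zero_le_one hγ.le le_rfl hγu.le)
    (kinkPt_mem_setT hβl hβu.le (by positivity)
      (by linarith [mul_nonneg (neg_nonneg.2 hγl.le) hy.le])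
      (by rw [hkt, le_div_iff₀ hY]; nlinarith) (by rw [hkt, div_le_iff₀ hY]; nlinarith))
    (mem_setT_of_yz_eq_zero zero_le_one le_rfl le_rfl hγ.le hγl.le) ?_
  · simp only [τ, μk, μe, μ₀]
    field_simp
    ring
  simp only [kinkPt, hkt, Prod.smul_mk, Prod.mk_add_mk, smul_eq_mul, Prod.mk.injEq, mul_zero,
    zero_mul, add_zero, zero_add]
  refine ⟨?_, ?_, ?_, ?_, ?_⟩ <;> simp only [τ, μk, μe, μ₀] <;> field_simp <;> ring

theorem face_mem_convexHull_two_kinks {b : ℝ} (hγ : γl < γu) (hγu : γu < 0) (hβl : βl ≤ 0)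
    (hβu : 0 < βu) (hbu : u - γl * x = b) (hy : 0 < y) (hb : 0 < b) (h₁ : y + u ≤ 0)
    (hyx : y ≤ βu * (1 - x)) (h₇ : b ≤ t - γl) (hkink : (βu - γu) * b ≤ βu * (t - γl))
    (hLS : βu * (t - γl) * (y + b) < βu * b * (y + b) - γl * b * y) :
    ((x, u, y, y / βu, t) : ℝ × ℝ × ℝ × ℝ × ℝ) ∈ convexHull ℝ (setT βl βu γl γu) := by
  obtain rfl : u = b + γl * x := by linarith
  have hγl : γl < 0 := hγ.trans hγu
  have hY : 0 < y + b := by linarith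
  have htl : 0 < t - γl := by linarith
  have hD : 0 < (βu - γl) * b - βu * (t - γl) := by
    nlinarith [mul_nonneg (neg_nonneg.2 hγl.le) hb.le]
  have hγl₀ : γl ≠ 0 := hγl.ne
  have hβu₀ : βu ≠ 0 := hβu.ne'
  have hb₀ : b ≠ 0 := hb.ne'
  have hβγ₀ : βu - γl ≠ 0 := by linarith
  have htl₀ : t - γl ≠ 0 := htl.ne'
  have hD₀ : (βu - γl) * b - βu * (t - γl) ≠ 0 := hD.ne'
  have hkt₁ : -(βu * (βu - γl - βu) / βu) = γl := by
    field_simp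
    ring
  have hkt₂ : -(βu * (t - γl - b) / b) = βu * (b - (t - γl)) / b := by
    ring
  set D := (βu - γl) * b - βu * (t - γl)
  set μ₂ := (t - γl) * b / D
  -- the `y`-mass carried by the kink point with `x = b / (t - γl)`; the kink point with `t = γl`
  -- carries the rest
  set m := βu * b * ((t - γl) - b) / D
  have hm : m ≤ y := by
    rw [div_le_iff₀ hD]
    nlinarith
  set μ₁ := (y - m) * (βu - γl) / (-γl * βu)
  set μe := (y + (b + γl * x)) / γl
  set μ₀ := 1 - x - y / βu
  refine mem_convexHull_of_eq_add_four (w₀ := μ₀) (w₁ := μ₁) (w₂ := μ₂) (w₃ := μe)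
    (q₀ := (0, 0 * γl, 0, 0, γl)) (q₁ := kinkPt βu βu (βu - γl))
    (q₂ := kinkPt βu b (t - γl)) (q₃ := (1, 1 * γl, 0, 0, γl))
    (by simp only [μ₀]; rw [sub_nonneg, div_le_iff₀ hβu]; linarith)
    (div_nonneg (mul_nonneg (by linarith) (by linarith)) (mul_pos (neg_pos.2 hγl) hβu).le)
    (div_nonneg (mul_nonneg htl.le hb.le) hD.le) (div_nonneg_of_nonpos h₁ hγl.le) ?_
    (mem_setT_of_yz_eq_zero le_rfl zero_le_one le_rfl hγ.le hγl.le)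
    (kinkPt_mem_setT hβl hβu.le hβu (by linarith) hkt₁.ge (by rw [hkt₁]; exact hγ.le))
    (kinkPt_mem_setT hβl hβu.le hb (by linarith)
      (by rw [hkt₂, le_div_iff₀ hb]; nlinarith) (by rw [hkt₂, div_le_iff₀ hb]; nlinarith))
    (mem_setT_of_yz_eq_zero zero_le_one le_rfl le_rfl hγ.le hγl.le) ?_
  · simp only [μ₀, μ₁, μ₂, μe, m]
    field_simp
    ring
  simp only [kinkPt, hkt₁, Prod.smul_mk, Prod.mk_add_mk, smul_eq_mul, Prod.mk.injEq, mul_zero,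
    zero_mul, add_zero, zero_add]
  refine ⟨?_, ?_, ?_, ?_, ?_⟩ <;> simp only [μ₀, μ₁, μ₂, μe, m] <;> field_simp <;> ring

theorem face_mem_convexHull (hγ : γl < γu) (hγu : γu < 0) (hβl : βl ≤ 0) (hβu : 0 < βu)
    (hy : 0 < y) (h₁ : y + u ≤ 0) (hyx : y ≤ βu * (1 - x)) (h₅ : 0 ≤ u - γl * x)
    (h₇ : u - γl * x ≤ t - γl) (h₈ : γu * x - u ≤ γu - t)
    (hfrac : (γu - γl) * y + βu * (γu * x - u) + γl * y * (u - γl * x) / (y + u - γl * x) ≤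
      βu * (γu - t))
    (hcut : βu * (γu - t) < (γu - γl) * y + βu * (γu * x - u) + γu * (u - γl * x)) :
    ((x, u, y, y / βu, t) : ℝ × ℝ × ℝ × ℝ × ℝ) ∈ convexHull ℝ (setT βl βu γl γu) := by
  obtain ⟨b, hbu⟩ : ∃ b, u - γl * x = b := ⟨_, rfl⟩
  rw [show y + u - γl * x = y + b by linarith, hbu] at hfrac
  rw [hbu] at h₅ h₇ hcut
  have hb : 0 < b := by
    rcases h₅.eq_or_lt with rfl | hb
    · simp only [mul_zero, zero_div, add_zero] at hfrac hcut
      linarith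
    · exact hb
  have hY : 0 < y + b := by linarith
  have hfrac' : ((γu - γl) * y + βu * (γu * x - u)) * (y + b) + γl * y * b ≤
      βu * (γu - t) * (y + b) := by
    have := mul_le_mul_of_nonneg_right hfrac hY.le
    rwa [add_mul _ (γl * y * b / (y + b)), div_mul_cancel₀ _ hY.ne'] at this
  rcases le_or_gt (βu * b * (y + b) - γl * b * y) (βu * (t - γl) * (y + b)) with hL | hL
  · exact face_mem_convexHull_one_kink hγ hγu hβl hβu hbu hy hb.le h₁
      (by linarith [mul_le_mul_of_nonneg_left h₈ hβu.le]) hL hfrac'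
  · exact face_mem_convexHull_two_kinks hγ hγu hβl hβu hbu hy hb h₁ hyx h₇
      (by nlinarith [mul_le_mul_of_nonneg_left hyx (sub_nonneg.2 hγ.le)]) hL

def zShift (ρ : ℝ) (p : ℝ × ℝ × ℝ × ℝ × ℝ) : ℝ × ℝ × ℝ × ℝ × ℝ :=
  (p.1, p.2.1, p.2.2.1, (1 - ρ) * p.2.2.2.1 + ρ * (1 - p.1), p.2.2.2.2)

theorem zShift_mem_setT {ρ : ℝ} (hβl : βl ≤ 0) (hβu : 0 ≤ βu) (hρ₀ : 0 ≤ ρ) (hρ₁ : ρ ≤ 1)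
    {p : ℝ × ℝ × ℝ × ℝ × ℝ} (hp : p ∈ setT βl βu γl γu) : zShift ρ p ∈ setT βl βu γl γu := by
  obtain ⟨x, u, y, z, t⟩ := p
  obtain ⟨hu, h₁, h₂, h₃, h₄, hz, hx₀, hx₁, htl, htu⟩ : memT βl βu γl γu x u y z t := hp
  have hzz : z ≤ (1 - ρ) * z + ρ * (1 - x) := by nlinarith
  show memT βl βu γl γu x u y ((1 - ρ) * z + ρ * (1 - x)) t
  exact ⟨hu, h₁, by nlinarith, by nlinarith, by nlinarith, by linarith, hx₀, hx₁, htl, htu⟩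

theorem zShift_mem_convexHull {ρ : ℝ} (hβl : βl ≤ 0) (hβu : 0 ≤ βu) (hρ₀ : 0 ≤ ρ) (hρ₁ : ρ ≤ 1)
    {p : ℝ × ℝ × ℝ × ℝ × ℝ} (hp : p ∈ convexHull ℝ (setT βl βu γl γu)) :
    zShift ρ p ∈ convexHull ℝ (setT βl βu γl γu) := by
  refine convexHull_min (t := zShift ρ ⁻¹' convexHull ℝ (setT βl βu γl γu))
    (fun q hq => subset_convexHull ℝ _ (zShift_mem_setT hβl hβu hρ₀ hρ₁ hq)) ?_ hp
  intro q₁ hq₁ q₂ hq₂ a c ha hc hac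
  have hlin : zShift ρ (a • q₁ + c • q₂) = a • zShift ρ q₁ + c • zShift ρ q₂ := by
    obtain rfl : c = 1 - a := by linarith
    simp only [zShift, Prod.smul_mk, Prod.mk_add_mk, Prod.fst_add, Prod.snd_add, Prod.smul_fst,
      Prod.smul_snd, smul_eq_mul, Prod.mk.injEq]
    refine ⟨trivial, trivial, trivial, by ring, trivial⟩
  rw [mem_preimage, hlin]
  exact convex_convexHull ℝ _ hq₁ hq₂ ha hc hac

theorem mem_convexHull_of_face (hβl : βl ≤ 0) (hβu : 0 < βu) (hyz : y ≤ βu * z) (hzx : z + x ≤ 1)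
    (h : ((x, u, y, y / βu, t) : ℝ × ℝ × ℝ × ℝ × ℝ) ∈ convexHull ℝ (setT βl βu γl γu)) :
    ((x, u, y, z, t) : ℝ × ℝ × ℝ × ℝ × ℝ) ∈ convexHull ℝ (setT βl βu γl γu) := by
  have hz : y / βu ≤ z := (div_le_iff₀' hβu).2 hyz
  obtain ⟨a, ρ, ha, hρ, haρ, hz'⟩ : z ∈ segment ℝ (y / βu) (1 - x) := by
    rw [segment_eq_Icc (by linarith)]
    exact ⟨hz, by linarith⟩
  obtain rfl : a = 1 - ρ := by linarith
  convert zShift_mem_convexHull hβl hβu.le hρ (by linarith) h using 1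
  rw [← hz']
  rfl

end Face

theorem setR2_subset_convexHull {βl βu γl γu : ℝ} (hγ : γl < γu) (hγu : γu < 0) (hβl : βl < 0)
    (hβu : 0 < βu) : setR2 βl βu γl γu ⊆ convexHull ℝ (setT βl βu γl γu) := by
  rintro ⟨x, u, y, z, t⟩ hp
  obtain ⟨h, hlin, hfrac⟩ : memR2 βl βu γl γu x u y z t := hp
  obtain ⟨-, -, htl, htu, hz⟩ := memR0_bounds hγ (hβl.trans hβu) h
  by_cases ht : t = γl ∨ t = γu
  · exact subset_convexHull ℝ _ (memT_of_memR0_of_endpoint hγ (hβl.trans hβu) h ht)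
  replace htl := htl.lt_of_ne' (not_or.1 ht).1
  replace htu := htu.lt_of_ne (not_or.1 ht).2
  rcases le_or_gt y 0 with hy | hy
  · exact mem_convexHull_of_nonpos hγ hγu hβl.le hβu.le h hz hy htl htu
  rcases le_or_gt ((γu - γl) * y + βu * (γu * x - u) + γu * (u - γl * x)) (βu * (γu - t))
    with hcut | hcut
  · exact mem_convexHull_of_pos hγ hγu hβl.le hβu h hy htl htu hlin hcut
  obtain ⟨h₁, h₂, h₃, -, h₅, -, h₇, h₈⟩ := h
  exact mem_convexHull_of_face hβl.le hβu h₃ (by linarith) <|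
    face_mem_convexHull hγ hγu hβl.le hβu hy h₁ (by nlinarith) h₅ h₇ h₈ (hfrac hy) hcut

theorem stmt9 (βl βu γl γu : ℝ)
    (hγ : γl < γu) (hγu : γu < 0) (hβl : βl < 0) (hβu : 0 < βu) :
    convexHull ℝ (setT βl βu γl γu) = setR2 βl βu γl γu :=
  (convexHull_min (setT_subset_setR2 hβu) (convex_setR2 (hγ.trans hγu) hβu.le)).antisymm
    (setR2_subset_convexHull hγ hγu hβl hβu)
end

section
/- Assume βl < 0. Let p = (x, u, y, z, t) ∈ R⁰ with 0 < x < 1 and γl < t < γu. If u < x·t, then p satisfies the following three inequalities strictly: γu·x − u > 0, u − γl·x < t − γl, and (u − βl·x)·(u − γl·x) < −βl·x·(t − γl). -/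
theorem stmt12 (βl βu γl γu x u y z t : ℝ) (hβl : βl < 0)
    (hyu : y + u ≤ 0) (hzx : z + x ≤ 1)
    (hyz1 : y ≤ βu * z) (hyz2 : βl * z ≤ y)
    (hus1 : 0 ≤ u - γl * x) (hus2 : 0 ≤ γu * x - u)
    (hust1 : u - γl * x ≤ t - γl) (hust2 : γu * x - u ≤ γu - t)
    (hx0 : 0 < x) (hx1 : x < 1) (htl : γl < t) (htu : t < γu)
    (hult : u < x * t) :
    0 < γu * x - u ∧ u - γl * x < t - γl ∧
      (u - βl * x) * (u - γl * x) < -βl * x * (t - γl) := by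
  have h1 : 0 < γu * x - u := by nlinarith
  have hA : u - γl * x < x * (t - γl) := by nlinarith
  have h2 : u - γl * x < t - γl := by nlinarith
  have hB : u - βl * x ≤ -βl := by nlinarith
  refine ⟨h1, h2, ?_⟩
  rcases le_or_gt (u - βl * x) 0 with hb | hb
  · have : (u - βl * x) * (u - γl * x) ≤ 0 := mul_nonpos_of_nonpos_of_nonneg hb hus1
    nlinarith
  · nlinarith [mul_le_mul_of_nonneg_right hB hus1, mul_lt_mul_of_pos_left hA (by linarith : (0:ℝ) < -βl)]
end

section
/- Assume βl < 0. Let p = (x, u, y, z, t) ∈ R⁰ with 0 < x < 1 and γl < t < γu. If u > x·t, then p satisfies the following two inequalities strictly: u − γl·x > 0 and γu·x − u < γu − t. -/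
theorem stmt13 (βl βu γl γu x u y z t : ℝ) (hβl : βl < 0)
    (hyu : y + u ≤ 0) (hzx : z + x ≤ 1)
    (hyz1 : y ≤ βu * z) (hyz2 : βl * z ≤ y)
    (hus1 : 0 ≤ u - γl * x) (hus2 : 0 ≤ γu * x - u)
    (hust1 : u - γl * x ≤ t - γl) (hust2 : γu * x - u ≤ γu - t)
    (hx0 : 0 < x) (hx1 : x < 1) (htl : γl < t) (htu : t < γu)
    (hugt : x * t < u) :
    0 < u - γl * x ∧ γu * x - u < γu - t := by
  constructor
  · nlinarith
  · nlinarith [mul_pos (sub_pos.2 hx1) (sub_pos.2 htu)]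
end

section
/- Assume βl < 0 < βu and γl < 0. Let p = (x, u, y, z, t) ∈ R⁰ with 0 < x < 1 and γl < t < γu. If u > x·t and y > 0, then p satisfies the following inequality strictly: (γu − γl)·y + βu·(γu·x − u) + γl·y·(u − γl·x)/(y + u − γl·x) < βu·(γu − t). -/
theorem stmt14 (βl βu γl γu x u y z t : ℝ)
    (hβl : βl < 0) (hβu : 0 < βu) (hγl : γl < 0)
    (hyu : y + u ≤ 0) (hzx : z + x ≤ 1)
    (hyz1 : y ≤ βu * z) (hyz2 : βl * z ≤ y)
    (hus1 : 0 ≤ u - γl * x) (hus2 : 0 ≤ γu * x - u)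
    (hust1 : u - γl * x ≤ t - γl) (hust2 : γu * x - u ≤ γu - t)
    (hx0 : 0 < x) (hx1 : x < 1) (htl : γl < t) (htu : t < γu)
    (hugt : x * t < u) (hy : 0 < y) :
    (γu - γl) * y + βu * (γu * x - u) + γl * y * (u - γl * x) / (y + u - γl * x) <
      βu * (γu - t) := by
  have hd : 0 < y + u - γl * x := by nlinarith
  have hu0 : u < 0 := by linarith
  have ht0 : t < 0 := by nlinarith
  have hyx : y ≤ βu * (1 - x) := by nlinarith
  have key : γl * y * (u - γl * x) <
      (βu * (γu - t) - ((γu - γl) * y + βu * (γu * x - u))) * (y + u - γl * x) := by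
    nlinarith [mul_pos hy (sub_pos.mpr hugt), mul_nonneg (sub_nonneg.mpr hust2) hus1,
      mul_nonneg (sub_nonneg.mpr hust2) hy.le, mul_nonneg (sub_nonneg.mpr hyx) hus1,
      mul_nonneg (sub_nonneg.mpr hyx) (sub_nonneg.mpr hust1),
      mul_pos hβu (sub_pos.mpr hugt), mul_nonneg hus1 hy.le, sq_nonneg y,
      mul_pos (sub_pos.mpr htu) hy, mul_nonneg (sub_nonneg.mpr hyx) hy.le]
  have h2 : γl * y * (u - γl * x) / (y + u - γl * x) <
      βu * (γu - t) - ((γu - γl) * y + βu * (γu * x - u)) := by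
    rw [div_lt_iff₀ hd]; linarith [key]
  linarith
end

section
/- Assume βl < 0. Every point p = (x, u, y, z, t) ∈ R⁰ satisfies (γl − βl)·x ≤ −βl. Moreover, if p satisfies y + u = 0, z + x = 1, y = βl·z, and u = γl·x, then (γl − βl)·x = −βl. -/
theorem stmt15 (βl βu γl γu x u y z t : ℝ) (hβl : βl < 0)
    (hyu : y + u ≤ 0) (hzx : z + x ≤ 1)
    (hyz1 : y ≤ βu * z) (hyz2 : βl * z ≤ y)
    (hus1 : 0 ≤ u - γl * x) (hus2 : 0 ≤ γu * x - u)
    (hust1 : u - γl * x ≤ t - γl) (hust2 : γu * x - u ≤ γu - t) :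
    (γl - βl) * x ≤ -βl ∧
      (y + u = 0 → z + x = 1 → y = βl * z → u = γl * x → (γl - βl) * x = -βl) := by
  constructor
  · nlinarith [mul_le_mul_of_nonpos_left hzx (le_of_lt hβl)]
  · intro h1 h2 h3 h4
    nlinarith [h2, h3, h4]
end

section
/- Assume γu > 0 and βl < 0 < βu. Let p = (x, u, y, z, t) ∈ R¹ with 0 < x < 1 and γl < t < γu. Suppose u > x·t and, in addition, either y ≤ 0 or p satisfies the strict inequality (γu − γl)·y + βu·(γu·x − u) + γl·y·(u − γl·x)/(y + u − γl·x) < βu·(γu − t). Then p is not an extreme point of R¹; that is, there exist two points p₁, p₂ ∈ R¹ with p₁ ≠ p₂ such that p = (1/2)·p₁ + (1/2)·p₂. -/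
set_option maxHeartbeats 1000000 in

lemma lin_small (A C : ℝ) (h : A = 0 ∨ C < 0) (hC : C ≤ 0) :
    ∃ δ : ℝ, 0 < δ ∧ ∀ e : ℝ, |e| ≤ δ → C + A * e ≤ 0 := by
  rcases h with h | h
  · exact ⟨1, one_pos, fun e _ => by rw [h]; linarith⟩
  · have hpos : (0:ℝ) < |A| + 1 := by positivity
    refine ⟨-C / (|A| + 1), div_pos (by linarith) hpos, fun e he => ?_⟩
    have h1 : |A * e| ≤ |A| * (-C / (|A| + 1)) := by
      rw [abs_mul]
      exact mul_le_mul_of_nonneg_left he (abs_nonneg A)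
    have h2 : A * e ≤ |A * e| := le_abs_self _
    have h3 : |A| * (-C / (|A| + 1)) ≤ -C := by
      rw [mul_div_assoc', div_le_iff₀ hpos]
      nlinarith [abs_nonneg A]
    linarith

lemma quad_small (A B C : ℝ) (hC : C < 0) :
    ∃ δ : ℝ, 0 < δ ∧ ∀ e : ℝ, |e| ≤ δ → C + A * e + B * e ^ 2 ≤ 0 := by
  have hpos : (0:ℝ) < |A| + |B| + 1 := by positivity
  refine ⟨min 1 (-C / (|A| + |B| + 1)), lt_min one_pos (div_pos (by linarith) hpos),
    fun e he => ?_⟩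
  have he1 : |e| ≤ 1 := he.trans (min_le_left _ _)
  have he2 : |e| ≤ -C / (|A| + |B| + 1) := he.trans (min_le_right _ _)
  have hkey : |e| * (|A| + |B| + 1) ≤ -C := by
    rw [← le_div_iff₀ hpos]; exact he2
  have hA : A * e ≤ |A| * |e| := by rw [← abs_mul]; exact le_abs_self _
  have hB : B * e ^ 2 ≤ |B| * |e| := by
    have h1 : B * e ^ 2 ≤ |B| * |e| ^ 2 := by
      rw [← abs_pow, ← abs_mul]; exact le_abs_self _
    nlinarith [mul_le_mul_of_nonneg_left he1 (mul_nonneg (abs_nonneg B) (abs_nonneg e)),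
      abs_nonneg e, abs_nonneg B]
  nlinarith [abs_nonneg e, abs_nonneg A, abs_nonneg B]

set_option maxHeartbeats 1000000 in
lemma master (βl βu γl γu x u y z t dx du dy dz dt : ℝ)
    (hmem : memR1 βl βu γl γu x u y z t)
    (hs5 : 0 < u - γl * x)
    (hs8 : γu * x - u < γu - t)
    (hF : y < 0 ∨
      ((γu - γl) * y + βu * (γu * x - u) - βu * (γu - t)) * (y + u - γl * x)
        + γl * y * (u - γl * x) < 0)
    (h1 : dy + du = 0 ∨ y + u < 0)
    (h2 : dz + dx = 0 ∨ z + x < 1)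
    (h3 : dy - βu * dz = 0 ∨ y < βu * z)
    (h4 : βl * dz - dy = 0 ∨ βl * z < y)
    (h6 : du - γu * dx = 0 ∨ u < γu * x)
    (h7 : du - γl * dx - dt = 0 ∨ u - γl * x < t - γl)
    (hN1 : ∃ δ : ℝ, 0 < δ ∧ ∀ e : ℝ, |e| ≤ δ →
      (u + e * du - βl * (x + e * dx)) * (u + e * du - γl * (x + e * dx)) ≤
        -βl * (x + e * dx) * (t + e * dt - γl))
    (hd : dx ≠ 0 ∨ dt ≠ 0) :
    ∃ p₁ p₂ : ℝ × ℝ × ℝ × ℝ × ℝ, p₁ ∈ setR1 βl βu γl γu ∧ p₂ ∈ setR1 βl βu γl γu ∧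
      p₁ ≠ p₂ ∧ ((x, u, y, z, t) : ℝ × ℝ × ℝ × ℝ × ℝ) = (1/2 : ℝ) • p₁ + (1/2 : ℝ) • p₂ := by
  obtain ⟨⟨c1, c2, c3, c4, c5, c6, c7, c8⟩, cN1, cN2⟩ := hmem
  obtain ⟨δ1, hδ1, H1⟩ := lin_small (dy + du) (y + u) h1 c1
  obtain ⟨δ2, hδ2, H2⟩ := lin_small (dz + dx) (z + x - 1)
    (h2.imp id (fun h => by linarith)) (by linarith)
  obtain ⟨δ3, hδ3, H3⟩ := lin_small (dy - βu * dz) (y - βu * z)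
    (h3.imp id (fun h => by linarith)) (by linarith)
  obtain ⟨δ4, hδ4, H4⟩ := lin_small (βl * dz - dy) (βl * z - y)
    (h4.imp id (fun h => by linarith)) (by linarith)
  obtain ⟨δ5, hδ5, H5⟩ := lin_small (γl * dx - du) (γl * x - u)
    (Or.inr (by linarith)) (by linarith)
  obtain ⟨δ6, hδ6, H6⟩ := lin_small (du - γu * dx) (u - γu * x)
    (h6.imp id (fun h => by linarith)) (by linarith)
  obtain ⟨δ7, hδ7, H7⟩ := lin_small (du - γl * dx - dt) ((u - γl * x) - (t - γl))
    (h7.imp id (fun h => by linarith)) (by linarith)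
  obtain ⟨δ8, hδ8, H8⟩ := lin_small (γu * dx - du + dt) ((γu * x - u) - (γu - t))
    (Or.inr (by linarith)) (by linarith)
  obtain ⟨δ9, hδ9, H9⟩ := hN1
  have hN2 : ∃ δ : ℝ, 0 < δ ∧ ∀ e : ℝ, |e| ≤ δ →
      0 ≤ (u + e * du) - γl * (x + e * dx) → (0 < y + e * dy →
      (γu - γl) * (y + e * dy) + βu * (γu * (x + e * dx) - (u + e * du)) +
        γl * (y + e * dy) * ((u + e * du) - γl * (x + e * dx)) /
          ((y + e * dy) + (u + e * du) - γl * (x + e * dx)) ≤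
        βu * (γu - (t + e * dt))) := by
    rcases hF with hy | hFlt
    · obtain ⟨δ, hδ, H⟩ := lin_small dy y (Or.inr hy) hy.le
      refine ⟨δ, hδ, fun e he _ hgate => ?_⟩
      exfalso; have := H e he; nlinarith
    · obtain ⟨δ, hδ, H⟩ := quad_small
        (((γu - γl) * dy + βu * (γu * dx - du) + βu * dt) * (y + u - γl * x)
          + ((γu - γl) * y + βu * (γu * x - u) - βu * (γu - t)) * (dy + du - γl * dx)
          + γl * (dy * (u - γl * x) + y * (du - γl * dx)))
        (((γu - γl) * dy + βu * (γu * dx - du) + βu * dt) * (dy + du - γl * dx)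
          + γl * dy * (du - γl * dx))
        (((γu - γl) * y + βu * (γu * x - u) - βu * (γu - t)) * (y + u - γl * x)
          + γl * y * (u - γl * x)) hFlt
      refine ⟨δ, hδ, fun e he hs5' hgate => ?_⟩
      have hFe : ((γu - γl) * (y + e * dy) + βu * (γu * (x + e * dx) - (u + e * du))
          - βu * (γu - (t + e * dt))) * ((y + e * dy) + (u + e * du) - γl * (x + e * dx))
          + γl * (y + e * dy) * ((u + e * du) - γl * (x + e * dx)) ≤ 0 := by
        have h := H e he
        have hEq : ((γu - γl) * (y + e * dy) + βu * (γu * (x + e * dx) - (u + e * du))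
            - βu * (γu - (t + e * dt))) * ((y + e * dy) + (u + e * du) - γl * (x + e * dx))
            + γl * (y + e * dy) * ((u + e * du) - γl * (x + e * dx)) =
            (((γu - γl) * y + βu * (γu * x - u) - βu * (γu - t)) * (y + u - γl * x)
              + γl * y * (u - γl * x))
            + (((γu - γl) * dy + βu * (γu * dx - du) + βu * dt) * (y + u - γl * x)
              + ((γu - γl) * y + βu * (γu * x - u) - βu * (γu - t)) * (dy + du - γl * dx)
              + γl * (dy * (u - γl * x) + y * (du - γl * dx))) * e
            + (((γu - γl) * dy + βu * (γu * dx - du) + βu * dt) * (dy + du - γl * dx)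
              + γl * dy * (du - γl * dx)) * e ^ 2 := by ring
        rw [hEq]; exact h
      have hD : 0 < (y + e * dy) + (u + e * du) - γl * (x + e * dx) := by linarith
      have hr : γl * (y + e * dy) * ((u + e * du) - γl * (x + e * dx)) /
          ((y + e * dy) + (u + e * du) - γl * (x + e * dx)) ≤
          βu * (γu - (t + e * dt)) - ((γu - γl) * (y + e * dy)
            + βu * (γu * (x + e * dx) - (u + e * du))) := by
        rw [div_le_iff₀ hD]; nlinarith [hFe]
      linarith
  obtain ⟨δ10, hδ10, H10⟩ := hN2
  obtain ⟨ε, hε0, m1, m2, m3, m4, m5, m6, m7, m8, m9, m10⟩ :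
      ∃ ε : ℝ, 0 < ε ∧ ε ≤ δ1 ∧ ε ≤ δ2 ∧ ε ≤ δ3 ∧ ε ≤ δ4 ∧ ε ≤ δ5 ∧ ε ≤ δ6 ∧ ε ≤ δ7 ∧
        ε ≤ δ8 ∧ ε ≤ δ9 ∧ ε ≤ δ10 := by
    refine ⟨min δ1 (min δ2 (min δ3 (min δ4 (min δ5 (min δ6 (min δ7 (min δ8 (min δ9 δ10)))))))),
      ?_, ?_, ?_, ?_, ?_, ?_, ?_, ?_, ?_, ?_, ?_⟩
    · exact lt_min hδ1 (lt_min hδ2 (lt_min hδ3 (lt_min hδ4 (lt_min hδ5 (lt_min hδ6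
        (lt_min hδ7 (lt_min hδ8 (lt_min hδ9 hδ10))))))))
    all_goals simp only [min_le_iff, le_refl, true_or, or_true]
  have key : ∀ e : ℝ, |e| ≤ ε →
      ((x + e * dx, u + e * du, y + e * dy, z + e * dz, t + e * dt) : ℝ × ℝ × ℝ × ℝ × ℝ) ∈
        setR1 βl βu γl γu := by
    intro e he
    have k5 := H5 e (he.trans m5)
    have hc5' : 0 ≤ (u + e * du) - γl * (x + e * dx) := by nlinarith [k5]
    refine ⟨⟨?_, ?_, ?_, ?_, ?_, ?_, ?_, ?_⟩, ?_, ?_⟩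
    · have := H1 e (he.trans m1); dsimp only; nlinarith [this]
    · have := H2 e (he.trans m2); dsimp only; nlinarith [this]
    · have := H3 e (he.trans m3); dsimp only; nlinarith [this]
    · have := H4 e (he.trans m4); dsimp only; nlinarith [this]
    · exact hc5'
    · have := H6 e (he.trans m6); dsimp only; nlinarith [this]
    · have := H7 e (he.trans m7); dsimp only; nlinarith [this]
    · have := H8 e (he.trans m8); dsimp only; nlinarith [this]
    · exact H9 e (he.trans m9)
    · exact H10 e (he.trans m10) hc5'
  refine ⟨(x + ε * dx, u + ε * du, y + ε * dy, z + ε * dz, t + ε * dt),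
    (x + (-ε) * dx, u + (-ε) * du, y + (-ε) * dy, z + (-ε) * dz, t + (-ε) * dt),
    key ε (by rw [abs_of_pos hε0]), key (-ε) (by rw [abs_neg, abs_of_pos hε0]), ?_, ?_⟩
  · intro h
    rw [Prod.mk.injEq, Prod.mk.injEq, Prod.mk.injEq, Prod.mk.injEq] at h
    rcases hd with hd | hd
    · have hx : ε * dx = 0 := by linarith [h.1]
      rcases mul_eq_zero.mp hx with h' | h'
      · exact absurd h' (ne_of_gt hε0)
      · exact hd h'
    · have ht : ε * dt = 0 := by linarith [h.2.2.2.2]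
      rcases mul_eq_zero.mp ht with h' | h'
      · exact absurd h' (ne_of_gt hε0)
      · exact hd h'
  · simp only [Prod.smul_mk, Prod.mk_add_mk, smul_eq_mul, Prod.mk.injEq]
    refine ⟨by ring, by ring, by ring, by ring, by ring⟩

set_option maxHeartbeats 1000000 in
theorem stmt17 (βl βu γl γu x u y z t : ℝ)
    (hγu : 0 < γu) (hβl : βl < 0) (hβu : 0 < βu)
    (hp : ((x, u, y, z, t) : ℝ × ℝ × ℝ × ℝ × ℝ) ∈ setR1 βl βu γl γu)
    (hx0 : 0 < x) (hx1 : x < 1) (htl : γl < t) (htu : t < γu)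
    (hugt : x * t < u)
    (hside : y ≤ 0 ∨
      (γu - γl) * y + βu * (γu * x - u) + γl * y * (u - γl * x) / (y + u - γl * x) <
        βu * (γu - t)) :
    ∃ p₁ p₂ : ℝ × ℝ × ℝ × ℝ × ℝ, p₁ ∈ setR1 βl βu γl γu ∧ p₂ ∈ setR1 βl βu γl γu ∧
      p₁ ≠ p₂ ∧ ((x, u, y, z, t) : ℝ × ℝ × ℝ × ℝ × ℝ) = (1/2 : ℝ) • p₁ + (1/2 : ℝ) • p₂ := by
  have hmem : memR1 βl βu γl γu x u y z t := hp
  obtain ⟨⟨c1, c2, c3, c4, c5, c6, c7, c8⟩, cN1, cN2⟩ := hmem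
  have hs5 : 0 < u - γl * x := by nlinarith [mul_pos hx0 (sub_pos.mpr htl)]
  have hs8 : γu * x - u < γu - t := by
    nlinarith [mul_pos (sub_pos.mpr hx1) (sub_pos.mpr htu)]
  have hF : y < 0 ∨
      ((γu - γl) * y + βu * (γu * x - u) - βu * (γu - t)) * (y + u - γl * x)
        + γl * y * (u - γl * x) < 0 := by
    rcases lt_trichotomy y 0 with hy | hy | hy
    · exact Or.inl hy
    · right; rw [hy]; nlinarith [mul_pos hβu (sub_pos.mpr hs8), hs5]
    · right
      rcases hside with h | h
      · linarith
      · have hD : 0 < y + u - γl * x := by linarith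
        have h2 : γl * y * (u - γl * x) / (y + u - γl * x) <
            βu * (γu - t) - (γu - γl) * y - βu * (γu * x - u) := by linarith
        rw [div_lt_iff₀ hD] at h2
        nlinarith [h2]
  -- shared radial ingredients
  have hn1rad : ∃ δ : ℝ, 0 < δ ∧ ∀ e : ℝ, |e| ≤ δ →
      (u + e * u - βl * (x + e * x)) * (u + e * u - γl * (x + e * x)) ≤
        -βl * (x + e * x) * (t + e * (t - γl) - γl) := by
    refine ⟨1, one_pos, fun e _ => ?_⟩
    nlinarith [mul_nonneg (sq_nonneg (1 + e)) (sub_nonneg.mpr cN1)]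
  have h6rad : u - γu * x = 0 ∨ u < γu * x := by
    rcases eq_or_lt_of_le c6 with h | h
    · exact Or.inl (by linarith)
    · exact Or.inr (by linarith)
  have h7rad : u - γl * x - (t - γl) = 0 ∨ u - γl * x < t - γl := by
    rcases eq_or_lt_of_le c7 with h | h
    · exact Or.inl (by linarith)
    · exact Or.inr h
  have hdrad : (x : ℝ) ≠ 0 ∨ (t - γl : ℝ) ≠ 0 := Or.inl (ne_of_gt hx0)
  by_cases hσ2 : z + x = 1
  · by_cases hσ1 : y + u = 0
    · by_cases hσ3 : y = βu * z
      · -- Leaf E : corner, direction (1, βu, -βu, -1, βu - γl)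
        have hz : z = 1 - x := by linarith
        have hy0 : 0 < y := by
          rw [hσ3, hz]; nlinarith
        have hu0 : u < 0 := by linarith
        have hn1lt : (u - βl * x) * (u - γl * x) < -βl * x * (t - γl) := by
          rcases eq_or_lt_of_le cN1 with h | h
          · exfalso
            nlinarith [mul_pos (neg_pos.mpr hβl) hx0, hs5, c7,
              mul_pos (mul_pos (neg_pos.mpr hβl) hx0) hs5,
              mul_lt_mul_of_pos_right hu0 hs5]
          · exact h
        have hC : (u - βl * x) * (u - γl * x) + βl * x * (t - γl) < 0 := by nlinarith [hn1lt]
        obtain ⟨δ, hδ, H⟩ := quad_small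
          ((u - βl * x) * (βu - γl) + (βu - βl) * (u - γl * x) + βl * ((t - γl) + x * (βu - γl)))
          ((βu - βl) * (βu - γl) + βl * (βu - γl))
          ((u - βl * x) * (u - γl * x) + βl * x * (t - γl)) hC
        refine master βl βu γl γu x u y z t 1 βu (-βu) (-1) (βu - γl) hp hs5 hs8 hF
          (Or.inl (by ring)) (Or.inl (by ring)) (Or.inl (by ring))
          (Or.inr (by nlinarith [hz])) (Or.inr (by nlinarith)) (Or.inl (by ring))
          ⟨δ, hδ, fun e he => ?_⟩ (Or.inl one_ne_zero)
        have h := H e he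
        have hEq : -βl * (x + e * 1) * (t + e * (βu - γl) - γl) -
            (u + e * βu - βl * (x + e * 1)) * (u + e * βu - γl * (x + e * 1)) =
            -(((u - βl * x) * (u - γl * x) + βl * x * (t - γl))
              + ((u - βl * x) * (βu - γl) + (βu - βl) * (u - γl * x)
                + βl * ((t - γl) + x * (βu - γl))) * e
              + ((βu - βl) * (βu - γl) + βl * (βu - γl)) * e ^ 2) := by ring
        linarith [h, hEq.ge, hEq.le]
      · by_cases hσ4 : βl * z = y
        · -- Leaf F : direction (0,0,0,0,1), derive strictness of C7 and N1
          have hz : z = 1 - x := by linarith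
          have hyv : y = βl - βl * x := by rw [← hσ4, hz]; ring
          have hu0 : 0 < u := by nlinarith [mul_pos (neg_pos.mpr hβl) (sub_pos.mpr hx1)]
          have hs7 : u - γl * x < t - γl := by
            rcases eq_or_lt_of_le c7 with h | h
            · exfalso
              nlinarith [cN1, mul_pos hu0 hs5, mul_pos (neg_pos.mpr hβl) hx0]
            · exact h
          have hn1lt : (u - βl * x) * (u - γl * x) < -βl * x * (t - γl) := by
            rcases eq_or_lt_of_le cN1 with h | h
            · exfalso
              have hub : u - βl * x - (-βl) = 0 := by linarith
              have h3 : (-βl) * (u - x * t) = 0 := by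
                linear_combination h - (u - γl * x) * hub
              have h4 : 0 < (-βl) * (u - x * t) :=
                mul_pos (neg_pos.mpr hβl) (sub_pos.mpr hugt)
              linarith
            · exact h
          have hC : (u - βl * x) * (u - γl * x) + βl * x * (t - γl) < 0 := by
            nlinarith [hn1lt]
          obtain ⟨δ, hδ, H⟩ := quad_small (βl * x) 0
            ((u - βl * x) * (u - γl * x) + βl * x * (t - γl)) hC
          refine master βl βu γl γu x u y z t 0 0 0 0 1 hp hs5 hs8 hF
            (Or.inl (by ring)) (Or.inl (by ring)) (Or.inl (by ring)) (Or.inl (by ring))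
            (Or.inl (by ring)) (Or.inr hs7)
            ⟨δ, hδ, fun e he => ?_⟩ (Or.inr one_ne_zero)
          have h := H e he
          have hEq : -βl * (x + e * 0) * (t + e * 1 - γl) -
              (u + e * 0 - βl * (x + e * 0)) * (u + e * 0 - γl * (x + e * 0)) =
              -(((u - βl * x) * (u - γl * x) + βl * x * (t - γl)) + (βl * x) * e
                + 0 * e ^ 2) := by ring
          linarith [h, hEq.ge, hEq.le]
        · -- Leaf G : direction (x, u, -u, -x, t - γl)
          exact master βl βu γl γu x u y z t x u (-u) (-x) (t - γl) hp hs5 hs8 hF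
            (Or.inl (by ring)) (Or.inl (by ring))
            (Or.inr (lt_of_le_of_ne c3 hσ3)) (Or.inr (lt_of_le_of_ne c4 hσ4))
            h6rad h7rad hn1rad hdrad
    · by_cases hσ3 : y = βu * z
      · -- Leaf B : direction (x, u, -βu*x, -x, t-γl)
        have h4' : βl * z < y := by
          rcases eq_or_lt_of_le c4 with h | h
          · exfalso; nlinarith [hβu, hβl]
          · exact h
        exact master βl βu γl γu x u y z t x u (-(βu * x)) (-x) (t - γl) hp hs5 hs8 hF
          (Or.inr (lt_of_le_of_ne c1 hσ1)) (Or.inl (by ring)) (Or.inl (by ring))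
          (Or.inr h4') h6rad h7rad hn1rad hdrad
      · by_cases hσ4 : βl * z = y
        · -- Leaf C : direction (x, u, -βl*x, -x, t-γl)
          exact master βl βu γl γu x u y z t x u (-(βl * x)) (-x) (t - γl) hp hs5 hs8 hF
            (Or.inr (lt_of_le_of_ne c1 hσ1)) (Or.inl (by ring))
            (Or.inr (lt_of_le_of_ne c3 hσ3)) (Or.inl (by ring))
            h6rad h7rad hn1rad hdrad
        · -- Leaf D : direction (x, u, 0, -x, t-γl)
          exact master βl βu γl γu x u y z t x u 0 (-x) (t - γl) hp hs5 hs8 hF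
            (Or.inr (lt_of_le_of_ne c1 hσ1)) (Or.inl (by ring))
            (Or.inr (lt_of_le_of_ne c3 hσ3)) (Or.inr (lt_of_le_of_ne c4 hσ4))
            h6rad h7rad hn1rad hdrad
  · have h2' : z + x < 1 := lt_of_le_of_ne c2 hσ2
    by_cases hσ1 : y + u = 0
    · by_cases hσ3 : y = βu * z
      · -- Leaf H : direction (x, u, -u, -u/βu, t-γl); u ≤ 0 here
        have hu : u ≤ 0 := by
          by_contra h
          push_neg at h
          have hy0 : y < 0 := by linarith
          have hz0 : z < 0 := by nlinarith [hσ3]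
          nlinarith [c4, mul_pos_of_neg_of_neg hβl hz0]
        have h4' : βl * (-(u / βu)) - -u = 0 ∨ βl * z < y := by
          rcases eq_or_lt_of_le hu with h | h
          · left; rw [h]; norm_num
          · right
            have hy0 : 0 < y := by linarith
            have hz0 : 0 < z := by nlinarith [hσ3]
            nlinarith [mul_neg_of_neg_of_pos hβl hz0]
        exact master βl βu γl γu x u y z t x u (-u) (-(u / βu)) (t - γl) hp hs5 hs8 hF
          (Or.inl (by ring)) (Or.inr h2')
          (Or.inl (by field_simp; ring)) h4' h6rad h7rad hn1rad hdrad
      · by_cases hσ4 : βl * z = y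
        · -- Leaf I : direction (x, u, -u, -u/βl, t-γl); 0 ≤ u here
          have hu : 0 ≤ u := by
            by_contra h
            push_neg at h
            have hy0 : 0 < y := by linarith
            have hz0 : z < 0 := by nlinarith [hσ4]
            nlinarith [c3, mul_neg_of_pos_of_neg hβu hz0]
          exact master βl βu γl γu x u y z t x u (-u) (-(u / βl)) (t - γl) hp hs5 hs8 hF
            (Or.inl (by ring)) (Or.inr h2')
            (Or.inr (lt_of_le_of_ne c3 hσ3))
            (Or.inl (by field_simp [ne_of_lt hβl]; try ring))
            h6rad h7rad hn1rad hdrad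
        · -- Leaf J : direction (x, u, -u, 0, t-γl)
          exact master βl βu γl γu x u y z t x u (-u) 0 (t - γl) hp hs5 hs8 hF
            (Or.inl (by ring)) (Or.inr h2')
            (Or.inr (lt_of_le_of_ne c3 hσ3)) (Or.inr (lt_of_le_of_ne c4 hσ4))
            h6rad h7rad hn1rad hdrad
    · -- Leaf A : direction (x, u, 0, 0, t-γl)
      exact master βl βu γl γu x u y z t x u 0 0 (t - γl) hp hs5 hs8 hF
        (Or.inr (lt_of_le_of_ne c1 hσ1)) (Or.inr h2')
        (Or.inl (by ring)) (Or.inl (by ring))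
        h6rad h7rad hn1rad hdrad
end

section
/- Assume γl < γu < 0 and βl < 0 < βu. Let p = (x, u, y, z, t) ∈ R² with 0 < x < 1 and γl < t < γu. If u > x·t, then p is not an extreme point of R²; that is, there exist two points p₁, p₂ ∈ R² with p₁ ≠ p₂ such that p = (1/2)·p₁ + (1/2)·p₂. -/
open Filter Topology

private lemma evLT {f g : ℝ → ℝ} (hf : Continuous f) (hg : Continuous g) (h : f 0 < g 0) :
    ∀ᶠ e in 𝓝 (0:ℝ), f e < g e :=
  hf.continuousAt.eventually_lt hg.continuousAt h

private lemma evLE {f g : ℝ → ℝ} (hf : Continuous f) (hg : Continuous g) (h : f 0 < g 0) :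
    ∀ᶠ e in 𝓝 (0:ℝ), f e ≤ g e :=
  (evLT hf hg h).mono fun _ h' => h'.le

private lemma memR2_intro (βl βu γl γu x u y z t : ℝ)
    (c1 : y + u ≤ 0) (c2 : z + x ≤ 1) (c3 : y ≤ βu * z) (c4 : βl * z ≤ y)
    (c5 : 0 ≤ u - γl * x) (c6 : 0 ≤ γu * x - u)
    (c7 : u - γl * x ≤ t - γl) (c8 : γu * x - u ≤ γu - t)
    (c9 : (γu - γl) * y + γl * (γu * x - u) + βu * (u - γl * x) ≤ βu * (t - γl))
    (c10 : 0 < y →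
      (γu - γl) * y + βu * (γu * x - u) + γl * y * (u - γl * x) / (y + u - γl * x) ≤
        βu * (γu - t)) :
    memR2 βl βu γl γu x u y z t :=
  ⟨⟨c1, c2, c3, c4, c5, c6, c7, c8⟩, c9, c10⟩

private lemma key10 (βl βu γl γu x u y z t : ℝ)
    (hγ : γl < γu) (hγu : γu < 0) (hβu : 0 < βu)
    (hc1 : y + u ≤ 0) (hc2 : z + x ≤ 1) (hc3 : y ≤ βu * z)
    (hx0 : 0 < x) (hx1 : x < 1) (htl : γl < t) (htu : t < γu)
    (hugt : x * t < u) (hy : 0 < y) :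
    ((γu - γl) * y + βu * (γu * x - u) - βu * (γu - t)) * (y + u - γl * x)
      + γl * y * (u - γl * x) < 0 := by
  have hγl : γl < 0 := hγ.trans hγu
  have hs : 0 < u - γl * x := by nlinarith [mul_pos hx0 (show (0:ℝ) < t - γl by linarith)]
  have hys : 0 < y + u - γl * x := by linarith
  have hyb : y ≤ βu * (1 - x) := by
    nlinarith [mul_le_mul_of_nonneg_left (show z ≤ 1 - x by linarith) hβu.le]
  have hA : 0 ≤ βu * (y + u - γl * x) * (u - x * t) :=
    mul_nonneg (mul_nonneg hβu.le hys.le) (by linarith)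
  have hB : 0 ≤ (γu - t) * (y + u - γl * x) * (βu * (1 - x) - y) :=
    mul_nonneg (mul_nonneg (by linarith) hys.le) (by linarith)
  have hC : 0 ≤ y * (t - γl) * (-(y + u)) :=
    mul_nonneg (mul_nonneg hy.le (by linarith)) (by linarith)
  have hD : y * γl * (u - x * t) < 0 :=
    mul_neg_of_neg_of_pos (mul_neg_of_pos_of_neg hy hγl) (by linarith)
  nlinarith [hA, hB, hC, hD]

private lemma mk_pair (βl βu γl γu x u y z t Dx Du Dy Dz Dt : ℝ)
    (hD : Dx ≠ 0 ∨ Dt ≠ 0)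
    (H : ∀ᶠ e in 𝓝 (0:ℝ),
      memR2 βl βu γl γu (x + e * Dx) (u + e * Du) (y + e * Dy) (z + e * Dz) (t + e * Dt)) :
    ∃ p₁ p₂ : ℝ × ℝ × ℝ × ℝ × ℝ, p₁ ∈ setR2 βl βu γl γu ∧ p₂ ∈ setR2 βl βu γl γu ∧
      p₁ ≠ p₂ ∧ ((x, u, y, z, t) : ℝ × ℝ × ℝ × ℝ × ℝ) = (1/2 : ℝ) • p₁ + (1/2 : ℝ) • p₂ := by
  have hneg : Filter.Tendsto (fun e : ℝ => -e) (𝓝 (0:ℝ)) (𝓝 (0:ℝ)) := by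
    simpa using (continuous_neg : Continuous fun e : ℝ => -e).tendsto 0
  have Hneg := hneg.eventually H
  have Hb := (H.and Hneg).filter_mono (nhdsWithin_le_nhds (s := Set.Ioi (0:ℝ)))
  obtain ⟨e, ⟨hmem1, hmem2⟩, hepos⟩ := (Hb.and eventually_mem_nhdsWithin).exists
  have he0 : e ≠ 0 := ne_of_gt hepos
  refine ⟨(x + e * Dx, u + e * Du, y + e * Dy, z + e * Dz, t + e * Dt),
          (x + -e * Dx, u + -e * Du, y + -e * Dy, z + -e * Dz, t + -e * Dt),
          hmem1, hmem2, ?_, ?_⟩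
  · intro hcontra
    rw [Prod.mk.injEq, Prod.mk.injEq, Prod.mk.injEq, Prod.mk.injEq] at hcontra
    obtain ⟨hx', hu', hy', hz', ht'⟩ := hcontra
    rcases hD with h | h
    · apply h
      have hm : e * Dx = 0 := by linarith
      exact (mul_eq_zero.mp hm).resolve_left he0
    · apply h
      have hm : e * Dt = 0 := by linarith
      exact (mul_eq_zero.mp hm).resolve_left he0
  · simp only [Prod.smul_mk, Prod.mk_add_mk, smul_eq_mul, Prod.mk.injEq]
    refine ⟨by ring, by ring, by ring, by ring, by ring⟩

private lemma caseC0 (βl βu γl γu x u y z t : ℝ)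
    (hγ : γl < γu)
    (hγu : γu < 0)
    (hx1 : x < 1)
    (h3 : y ≤ βu * z)
    (h4 : βl * z ≤ y)
    (h6 : 0 ≤ γu * x - u)
    (h7 : u - γl * x ≤ t - γl)
    (h9 : (γu - γl) * y + γl * (γu * x - u) + βu * (u - γl * x) ≤ βu * (t - γl))
    (hu0 : u < 0)
    (h5s : 0 < u - γl * x)
    (h8s : γu * x - u < γu - t)
    (hz : z = 0)
    (hy0 : y = 0)
    :
    ∃ p₁ p₂ : ℝ × ℝ × ℝ × ℝ × ℝ, p₁ ∈ setR2 βl βu γl γu ∧ p₂ ∈ setR2 βl βu γl γu ∧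
      p₁ ≠ p₂ ∧ ((x, u, y, z, t) : ℝ × ℝ × ℝ × ℝ × ℝ) = (1/2 : ℝ) • p₁ + (1/2 : ℝ) • p₂ := by
  refine mk_pair βl βu γl γu x u y z t 1 γu 0 0 (γu - γl)
    (Or.inl one_ne_zero) ?_
  have Ee1 : ∀ᶠ e in 𝓝 (0:ℝ),
      (y + e * 0) + (u + e * γu) ≤ 0 :=
    evLE (by fun_prop) (by fun_prop) (by simp; linarith)
  have Ee2 : ∀ᶠ e in 𝓝 (0:ℝ),
      (z + e * 0) + (x + e * 1) ≤ 1 :=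
    evLE (by fun_prop) (by fun_prop) (by simp [hz]; linarith)
  have Ee5 : ∀ᶠ e in 𝓝 (0:ℝ),
      (0:ℝ) ≤ (u + e * γu) - γl * (x + e * 1) :=
    evLE (by fun_prop) (by fun_prop) (by simpa using h5s)
  have Ee8 : ∀ᶠ e in 𝓝 (0:ℝ),
      γu * (x + e * 1) - (u + e * γu) ≤ γu - (t + e * (γu - γl)) :=
    evLE (by fun_prop) (by fun_prop) (by simpa using h8s)
  filter_upwards [Ee1, Ee2, Ee5, Ee8] with e e1 e2 e5 e8
  refine memR2_intro _ _ _ _ _ _ _ _ _ e1 e2 ?_ ?_ e5 ?_ ?_ e8 ?_ ?_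
  · linarith [h3]
  · linarith [h4]
  · linarith [h6]
  · linarith [h7]
  · linarith [h9]
  · intro hy'
    exact absurd hy' (by simpa using not_lt.2 hy0.le)

private lemma caseC2 (βl βu γl γu x u y z t : ℝ)
    (hγ : γl < γu)
    (hγu : γu < 0)
    (hβl : βl < 0)
    (hβu : 0 < βu)
    (h2 : z + x ≤ 1)
    (h4 : βl * z ≤ y)
    (h6 : 0 ≤ γu * x - u)
    (h7 : u - γl * x ≤ t - γl)
    (h9 : (γu - γl) * y + γl * (γu * x - u) + βu * (u - γl * x) ≤ βu * (t - γl))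
    (hu0 : u < 0)
    (h5s : 0 < u - γl * x)
    (h8s : γu * x - u < γu - t)
    (hzpos : 0 < z)
    (hyneg : y < 0)
    :
    ∃ p₁ p₂ : ℝ × ℝ × ℝ × ℝ × ℝ, p₁ ∈ setR2 βl βu γl γu ∧ p₂ ∈ setR2 βl βu γl γu ∧
      p₁ ≠ p₂ ∧ ((x, u, y, z, t) : ℝ × ℝ × ℝ × ℝ × ℝ) = (1/2 : ℝ) • p₁ + (1/2 : ℝ) • p₂ := by
  have hγl : γl < 0 := hγ.trans hγu
  have h9sC2 : (γu - γl) * y + γl * (γu * x - u) + βu * (u - γl * x) < βu * (t - γl) := by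
    nlinarith [mul_nonneg (neg_nonneg.2 hγl.le) h6,
      mul_neg_of_pos_of_neg (show (0:ℝ) < γu - γl by linarith) hyneg,
      mul_le_mul_of_nonneg_left h7 hβu.le]
  refine mk_pair βl βu γl γu x u y z t 1 γu (-βl) (-1) (γu - γl)
    (Or.inl one_ne_zero) ?_
  have Ee1 : ∀ᶠ e in 𝓝 (0:ℝ),
      (y + e * (-βl)) + (u + e * γu) ≤ 0 :=
    evLE (by fun_prop) (by fun_prop) (by simp; linarith)
  have Ee3 : ∀ᶠ e in 𝓝 (0:ℝ),
      (y + e * (-βl)) ≤ βu * (z + e * (-1)) :=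
    evLE (by fun_prop) (by fun_prop) (by simp; nlinarith [mul_pos hβu hzpos])
  have Ee5 : ∀ᶠ e in 𝓝 (0:ℝ),
      (0:ℝ) ≤ (u + e * γu) - γl * (x + e * 1) :=
    evLE (by fun_prop) (by fun_prop) (by simpa using h5s)
  have Ee8 : ∀ᶠ e in 𝓝 (0:ℝ),
      γu * (x + e * 1) - (u + e * γu) ≤ γu - (t + e * (γu - γl)) :=
    evLE (by fun_prop) (by fun_prop) (by simpa using h8s)
  have Ee9 : ∀ᶠ e in 𝓝 (0:ℝ),
      (γu - γl) * (y + e * (-βl)) + γl * (γu * (x + e * 1) - (u + e * γu)) + βu * ((u + e * γu) - γl * (x + e * 1)) ≤ βu * ((t + e * (γu - γl)) - γl) :=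
    evLE (by fun_prop) (by fun_prop) (by simpa using h9sC2)
  have Eeyneg : ∀ᶠ e in 𝓝 (0:ℝ),
      (y + e * (-βl)) < 0 :=
    evLT (by fun_prop) (by fun_prop) (by simpa using hyneg)
  filter_upwards [Ee1, Ee3, Ee5, Ee8, Ee9, Eeyneg] with e e1 e3 e5 e8 e9 eyneg
  refine memR2_intro _ _ _ _ _ _ _ _ _ e1 ?_ e3 ?_ e5 ?_ ?_ e8 e9 ?_
  · linarith [h2]
  · linarith [h4]
  · linarith [h6]
  · linarith [h7]
  · intro hy'
    exact absurd hy' (not_lt.2 eyneg.le)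

private lemma caseC1 (βl βu γl γu x u y z t : ℝ)
    (hγ : γl < γu)
    (hγu : γu < 0)
    (h2 : z + x ≤ 1)
    (h6 : 0 ≤ γu * x - u)
    (h7 : u - γl * x ≤ t - γl)
    (h9 : (γu - γl) * y + γl * (γu * x - u) + βu * (u - γl * x) ≤ βu * (t - γl))
    (hu0 : u < 0)
    (h5s : 0 < u - γl * x)
    (h8s : γu * x - u < γu - t)
    (hyle : y ≤ 0)
    (h4s : βl * z < y)
    (h3s : y < βu * z)
    :
    ∃ p₁ p₂ : ℝ × ℝ × ℝ × ℝ × ℝ, p₁ ∈ setR2 βl βu γl γu ∧ p₂ ∈ setR2 βl βu γl γu ∧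
      p₁ ≠ p₂ ∧ ((x, u, y, z, t) : ℝ × ℝ × ℝ × ℝ × ℝ) = (1/2 : ℝ) • p₁ + (1/2 : ℝ) • p₂ := by
  refine mk_pair βl βu γl γu x u y z t 1 γu 0 (-1) (γu - γl)
    (Or.inl one_ne_zero) ?_
  have Ee1 : ∀ᶠ e in 𝓝 (0:ℝ),
      (y + e * 0) + (u + e * γu) ≤ 0 :=
    evLE (by fun_prop) (by fun_prop) (by simp; linarith)
  have Ee3 : ∀ᶠ e in 𝓝 (0:ℝ),
      (y + e * 0) ≤ βu * (z + e * (-1)) :=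
    evLE (by fun_prop) (by fun_prop) (by simp; linarith)
  have Ee4 : ∀ᶠ e in 𝓝 (0:ℝ),
      βl * (z + e * (-1)) ≤ (y + e * 0) :=
    evLE (by fun_prop) (by fun_prop) (by simp; linarith)
  have Ee5 : ∀ᶠ e in 𝓝 (0:ℝ),
      (0:ℝ) ≤ (u + e * γu) - γl * (x + e * 1) :=
    evLE (by fun_prop) (by fun_prop) (by simpa using h5s)
  have Ee8 : ∀ᶠ e in 𝓝 (0:ℝ),
      γu * (x + e * 1) - (u + e * γu) ≤ γu - (t + e * (γu - γl)) :=
    evLE (by fun_prop) (by fun_prop) (by simpa using h8s)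
  filter_upwards [Ee1, Ee3, Ee4, Ee5, Ee8] with e e1 e3 e4 e5 e8
  refine memR2_intro _ _ _ _ _ _ _ _ _ e1 ?_ e3 e4 e5 ?_ ?_ e8 ?_ ?_
  · linarith [h2]
  · linarith [h6]
  · linarith [h7]
  · linarith [h9]
  · intro hy'
    exact absurd hy' (by simpa using not_lt.2 hyle)

private lemma caseG (βl βu γl γu x u y z t : ℝ)
    (hγ : γl < γu)
    (hγu : γu < 0)
    (hβl : βl < 0)
    (hβu : 0 < βu)
    (h1 : y + u ≤ 0)
    (h2 : z + x ≤ 1)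
    (h3 : y ≤ βu * z)
    (h4 : βl * z ≤ y)
    (h5 : 0 ≤ u - γl * x)
    (h6 : 0 ≤ γu * x - u)
    (h7 : u - γl * x ≤ t - γl)
    (h8 : γu * x - u ≤ γu - t)
    (h9 : (γu - γl) * y + γl * (γu * x - u) + βu * (u - γl * x) ≤ βu * (t - γl))
    (h5s : 0 < u - γl * x)
    (h8s : γu * x - u < γu - t)
    (hy : 0 < y)
    (h4s : βl * z < y)
    (hys : 0 < y + u - γl * x)
    (hkey : ((γu - γl) * y + βu * (γu * x - u) - βu * (γu - t)) * (y + u - γl * x) + γl * y * (u - γl * x) < 0)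
    (h1s : y + u < 0)
    (h6s : 0 < γu * x - u)
    (h7t : u - γl * x = t - γl)
    :
    ∃ p₁ p₂ : ℝ × ℝ × ℝ × ℝ × ℝ, p₁ ∈ setR2 βl βu γl γu ∧ p₂ ∈ setR2 βl βu γl γu ∧
      p₁ ≠ p₂ ∧ ((x, u, y, z, t) : ℝ × ℝ × ℝ × ℝ × ℝ) = (1/2 : ℝ) • p₁ + (1/2 : ℝ) • p₂ := by
  refine mk_pair βl βu γl γu x u y z t γl (γl * γu - βu * (γu - γl)) (-(βu * γl)) (-γl) (γl * γu - βu * (γu - γl) - γl * γl)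
    (Or.inl (ne_of_lt (hγ.trans hγu))) ?_
  have Ee1 : ∀ᶠ e in 𝓝 (0:ℝ),
      (y + e * (-(βu * γl))) + (u + e * (γl * γu - βu * (γu - γl))) ≤ 0 :=
    evLE (by fun_prop) (by fun_prop) (by simp; linarith [h1s])
  have Ee4 : ∀ᶠ e in 𝓝 (0:ℝ),
      βl * (z + e * (-γl)) ≤ (y + e * (-(βu * γl))) :=
    evLE (by fun_prop) (by fun_prop) (by simp; linarith [h4s])
  have Ee5 : ∀ᶠ e in 𝓝 (0:ℝ),
      (0:ℝ) ≤ (u + e * (γl * γu - βu * (γu - γl))) - γl * (x + e * γl) :=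
    evLE (by fun_prop) (by fun_prop) (by simpa using h5s)
  have Ee6 : ∀ᶠ e in 𝓝 (0:ℝ),
      (0:ℝ) ≤ γu * (x + e * γl) - (u + e * (γl * γu - βu * (γu - γl))) :=
    evLE (by fun_prop) (by fun_prop) (by simpa using h6s)
  have Ee8 : ∀ᶠ e in 𝓝 (0:ℝ),
      γu * (x + e * γl) - (u + e * (γl * γu - βu * (γu - γl))) ≤ γu - (t + e * (γl * γu - βu * (γu - γl) - γl * γl)) :=
    evLE (by fun_prop) (by fun_prop) (by simpa using h8s)
  have Eeden : ∀ᶠ e in 𝓝 (0:ℝ),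
      (0:ℝ) < (y + e * (-(βu * γl))) + (u + e * (γl * γu - βu * (γu - γl))) - γl * (x + e * γl) :=
    evLT (by fun_prop) (by fun_prop) (by simpa using hys)
  have Eepoly : ∀ᶠ e in 𝓝 (0:ℝ),
      ((γu - γl) * (y + e * (-(βu * γl))) + βu * (γu * (x + e * γl) - (u + e * (γl * γu - βu * (γu - γl)))) - βu * (γu - (t + e * (γl * γu - βu * (γu - γl) - γl * γl)))) * ((y + e * (-(βu * γl))) + (u + e * (γl * γu - βu * (γu - γl))) - γl * (x + e * γl)) + γl * (y + e * (-(βu * γl))) * ((u + e * (γl * γu - βu * (γu - γl))) - γl * (x + e * γl)) < 0 :=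
    evLT (by fun_prop) (by fun_prop) (by simp; linarith [hkey])
  filter_upwards [Ee1, Ee4, Ee5, Ee6, Ee8, Eeden, Eepoly] with e e1 e4 e5 e6 e8 eden epoly
  refine memR2_intro _ _ _ _ _ _ _ _ _ e1 ?_ ?_ e4 e5 e6 ?_ e8 ?_ ?_
  · linarith [h2]
  · linarith [h3]
  · linarith [h7]
  · linarith [h9]
  · intro _
    have h' : γl * (y + e * (-(βu * γl))) * ((u + e * (γl * γu - βu * (γu - γl))) - γl * (x + e * γl)) / ((y + e * (-(βu * γl))) + (u + e * (γl * γu - βu * (γu - γl))) - γl * (x + e * γl)) ≤ βu * (γu - (t + e * (γl * γu - βu * (γu - γl) - γl * γl))) - (γu - γl) * (y + e * (-(βu * γl))) - βu * (γu * (x + e * γl) - (u + e * (γl * γu - βu * (γu - γl)))) := by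
      rw [div_le_iff₀ eden]
      linarith [epoly]
    linarith [h']

private lemma caseK (βl βu γl γu x u y z t : ℝ)
    (hγ : γl < γu)
    (hγu : γu < 0)
    (hβl : βl < 0)
    (hβu : 0 < βu)
    (h1 : y + u ≤ 0)
    (h2 : z + x ≤ 1)
    (h3 : y ≤ βu * z)
    (h4 : βl * z ≤ y)
    (h5 : 0 ≤ u - γl * x)
    (h6 : 0 ≤ γu * x - u)
    (h7 : u - γl * x ≤ t - γl)
    (h8 : γu * x - u ≤ γu - t)
    (h9 : (γu - γl) * y + γl * (γu * x - u) + βu * (u - γl * x) ≤ βu * (t - γl))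
    (h5s : 0 < u - γl * x)
    (h8s : γu * x - u < γu - t)
    (hy : 0 < y)
    (h4s : βl * z < y)
    (hys : 0 < y + u - γl * x)
    (hkey : ((γu - γl) * y + βu * (γu * x - u) - βu * (γu - t)) * (y + u - γl * x) + γl * y * (u - γl * x) < 0)
    (h7s : u - γl * x < t - γl)
    (h6s : 0 < γu * x - u)
    :
    ∃ p₁ p₂ : ℝ × ℝ × ℝ × ℝ × ℝ, p₁ ∈ setR2 βl βu γl γu ∧ p₂ ∈ setR2 βl βu γl γu ∧
      p₁ ≠ p₂ ∧ ((x, u, y, z, t) : ℝ × ℝ × ℝ × ℝ × ℝ) = (1/2 : ℝ) • p₁ + (1/2 : ℝ) • p₂ := by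
  refine mk_pair βl βu γl γu x u y z t βu (βu * βu) (-(βu * βu)) (-βu) ((γl - βu) * (γu - βu))
    (Or.inl (ne_of_gt hβu)) ?_
  have Ee4 : ∀ᶠ e in 𝓝 (0:ℝ),
      βl * (z + e * (-βu)) ≤ (y + e * (-(βu * βu))) :=
    evLE (by fun_prop) (by fun_prop) (by simp; linarith [h4s])
  have Ee5 : ∀ᶠ e in 𝓝 (0:ℝ),
      (0:ℝ) ≤ (u + e * (βu * βu)) - γl * (x + e * βu) :=
    evLE (by fun_prop) (by fun_prop) (by simpa using h5s)
  have Ee6 : ∀ᶠ e in 𝓝 (0:ℝ),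
      (0:ℝ) ≤ γu * (x + e * βu) - (u + e * (βu * βu)) :=
    evLE (by fun_prop) (by fun_prop) (by simpa using h6s)
  have Ee7 : ∀ᶠ e in 𝓝 (0:ℝ),
      (u + e * (βu * βu)) - γl * (x + e * βu) ≤ (t + e * ((γl - βu) * (γu - βu))) - γl :=
    evLE (by fun_prop) (by fun_prop) (by simpa using h7s)
  have Ee8 : ∀ᶠ e in 𝓝 (0:ℝ),
      γu * (x + e * βu) - (u + e * (βu * βu)) ≤ γu - (t + e * ((γl - βu) * (γu - βu))) :=
    evLE (by fun_prop) (by fun_prop) (by simpa using h8s)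
  have Eeden : ∀ᶠ e in 𝓝 (0:ℝ),
      (0:ℝ) < (y + e * (-(βu * βu))) + (u + e * (βu * βu)) - γl * (x + e * βu) :=
    evLT (by fun_prop) (by fun_prop) (by simpa using hys)
  have Eepoly : ∀ᶠ e in 𝓝 (0:ℝ),
      ((γu - γl) * (y + e * (-(βu * βu))) + βu * (γu * (x + e * βu) - (u + e * (βu * βu))) - βu * (γu - (t + e * ((γl - βu) * (γu - βu))))) * ((y + e * (-(βu * βu))) + (u + e * (βu * βu)) - γl * (x + e * βu)) + γl * (y + e * (-(βu * βu))) * ((u + e * (βu * βu)) - γl * (x + e * βu)) < 0 :=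
    evLT (by fun_prop) (by fun_prop) (by simp; linarith [hkey])
  filter_upwards [Ee4, Ee5, Ee6, Ee7, Ee8, Eeden, Eepoly] with e e4 e5 e6 e7 e8 eden epoly
  refine memR2_intro _ _ _ _ _ _ _ _ _ ?_ ?_ ?_ e4 e5 e6 e7 e8 ?_ ?_
  · linarith [h1]
  · linarith [h2]
  · linarith [h3]
  · linarith [h9]
  · intro _
    have h' : γl * (y + e * (-(βu * βu))) * ((u + e * (βu * βu)) - γl * (x + e * βu)) / ((y + e * (-(βu * βu))) + (u + e * (βu * βu)) - γl * (x + e * βu)) ≤ βu * (γu - (t + e * ((γl - βu) * (γu - βu)))) - (γu - γl) * (y + e * (-(βu * βu))) - βu * (γu * (x + e * βu) - (u + e * (βu * βu))) := by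
      rw [div_le_iff₀ eden]
      linarith [epoly]
    linarith [h']

private lemma caseL (βl βu γl γu x u y z t : ℝ)
    (hγ : γl < γu)
    (hγu : γu < 0)
    (hβl : βl < 0)
    (hβu : 0 < βu)
    (h1 : y + u ≤ 0)
    (h2 : z + x ≤ 1)
    (h3 : y ≤ βu * z)
    (h4 : βl * z ≤ y)
    (h5 : 0 ≤ u - γl * x)
    (h6 : 0 ≤ γu * x - u)
    (h7 : u - γl * x ≤ t - γl)
    (h8 : γu * x - u ≤ γu - t)
    (h9 : (γu - γl) * y + γl * (γu * x - u) + βu * (u - γl * x) ≤ βu * (t - γl))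
    (h5s : 0 < u - γl * x)
    (h8s : γu * x - u < γu - t)
    (hy : 0 < y)
    (h4s : βl * z < y)
    (hys : 0 < y + u - γl * x)
    (hkey : ((γu - γl) * y + βu * (γu * x - u) - βu * (γu - t)) * (y + u - γl * x) + γl * y * (u - γl * x) < 0)
    (h7s : u - γl * x < t - γl)
    (h6t : γu * x - u = 0)
    (h1s : y + u < 0)
    :
    ∃ p₁ p₂ : ℝ × ℝ × ℝ × ℝ × ℝ, p₁ ∈ setR2 βl βu γl γu ∧ p₂ ∈ setR2 βl βu γl γu ∧
      p₁ ≠ p₂ ∧ ((x, u, y, z, t) : ℝ × ℝ × ℝ × ℝ × ℝ) = (1/2 : ℝ) • p₁ + (1/2 : ℝ) • p₂ := by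
  refine mk_pair βl βu γl γu x u y z t 1 γu (-βu) (-1) 0
    (Or.inl one_ne_zero) ?_
  have Ee1 : ∀ᶠ e in 𝓝 (0:ℝ),
      (y + e * (-βu)) + (u + e * γu) ≤ 0 :=
    evLE (by fun_prop) (by fun_prop) (by simpa using h1s)
  have Ee4 : ∀ᶠ e in 𝓝 (0:ℝ),
      βl * (z + e * (-1)) ≤ (y + e * (-βu)) :=
    evLE (by fun_prop) (by fun_prop) (by simp; linarith [h4s])
  have Ee5 : ∀ᶠ e in 𝓝 (0:ℝ),
      (0:ℝ) ≤ (u + e * γu) - γl * (x + e * 1) :=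
    evLE (by fun_prop) (by fun_prop) (by simpa using h5s)
  have Ee7 : ∀ᶠ e in 𝓝 (0:ℝ),
      (u + e * γu) - γl * (x + e * 1) ≤ (t + e * 0) - γl :=
    evLE (by fun_prop) (by fun_prop) (by simpa using h7s)
  have Eeden : ∀ᶠ e in 𝓝 (0:ℝ),
      (0:ℝ) < (y + e * (-βu)) + (u + e * γu) - γl * (x + e * 1) :=
    evLT (by fun_prop) (by fun_prop) (by simpa using hys)
  have Eepoly : ∀ᶠ e in 𝓝 (0:ℝ),
      ((γu - γl) * (y + e * (-βu)) + βu * (γu * (x + e * 1) - (u + e * γu)) - βu * (γu - (t + e * 0))) * ((y + e * (-βu)) + (u + e * γu) - γl * (x + e * 1)) + γl * (y + e * (-βu)) * ((u + e * γu) - γl * (x + e * 1)) < 0 :=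
    evLT (by fun_prop) (by fun_prop) (by simp; linarith [hkey])
  filter_upwards [Ee1, Ee4, Ee5, Ee7, Eeden, Eepoly] with e e1 e4 e5 e7 eden epoly
  refine memR2_intro _ _ _ _ _ _ _ _ _ e1 ?_ ?_ e4 e5 ?_ e7 ?_ ?_ ?_
  · linarith [h2]
  · linarith [h3]
  · linarith [h6t]
  · linarith [h8]
  · linarith [h9]
  · intro _
    have h' : γl * (y + e * (-βu)) * ((u + e * γu) - γl * (x + e * 1)) / ((y + e * (-βu)) + (u + e * γu) - γl * (x + e * 1)) ≤ βu * (γu - (t + e * 0)) - (γu - γl) * (y + e * (-βu)) - βu * (γu * (x + e * 1) - (u + e * γu)) := by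
      rw [div_le_iff₀ eden]
      linarith [epoly]
    linarith [h']

private lemma caseM (βl βu γl γu x u y z t : ℝ)
    (hγ : γl < γu)
    (hγu : γu < 0)
    (hβl : βl < 0)
    (hβu : 0 < βu)
    (h1 : y + u ≤ 0)
    (h2 : z + x ≤ 1)
    (h3 : y ≤ βu * z)
    (h4 : βl * z ≤ y)
    (h5 : 0 ≤ u - γl * x)
    (h6 : 0 ≤ γu * x - u)
    (h7 : u - γl * x ≤ t - γl)
    (h8 : γu * x - u ≤ γu - t)
    (h9 : (γu - γl) * y + γl * (γu * x - u) + βu * (u - γl * x) ≤ βu * (t - γl))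
    (h5s : 0 < u - γl * x)
    (h8s : γu * x - u < γu - t)
    (hy : 0 < y)
    (h4s : βl * z < y)
    (hys : 0 < y + u - γl * x)
    (hkey : ((γu - γl) * y + βu * (γu * x - u) - βu * (γu - t)) * (y + u - γl * x) + γl * y * (u - γl * x) < 0)
    (h7s : u - γl * x < t - γl)
    (h6t : γu * x - u = 0)
    (h1t : y + u = 0)
    (h2s : z + x < 1)
    :
    ∃ p₁ p₂ : ℝ × ℝ × ℝ × ℝ × ℝ, p₁ ∈ setR2 βl βu γl γu ∧ p₂ ∈ setR2 βl βu γl γu ∧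
      p₁ ≠ p₂ ∧ ((x, u, y, z, t) : ℝ × ℝ × ℝ × ℝ × ℝ) = (1/2 : ℝ) • p₁ + (1/2 : ℝ) • p₂ := by
  refine mk_pair βl βu γl γu x u y z t βu (βu * γu) (-(βu * γu)) (-γu) ((γu - γl) * (βu - γu))
    (Or.inl (ne_of_gt hβu)) ?_
  have Ee2 : ∀ᶠ e in 𝓝 (0:ℝ),
      (z + e * (-γu)) + (x + e * βu) ≤ 1 :=
    evLE (by fun_prop) (by fun_prop) (by simpa using h2s)
  have Ee4 : ∀ᶠ e in 𝓝 (0:ℝ),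
      βl * (z + e * (-γu)) ≤ (y + e * (-(βu * γu))) :=
    evLE (by fun_prop) (by fun_prop) (by simp; linarith [h4s])
  have Ee5 : ∀ᶠ e in 𝓝 (0:ℝ),
      (0:ℝ) ≤ (u + e * (βu * γu)) - γl * (x + e * βu) :=
    evLE (by fun_prop) (by fun_prop) (by simpa using h5s)
  have Ee7 : ∀ᶠ e in 𝓝 (0:ℝ),
      (u + e * (βu * γu)) - γl * (x + e * βu) ≤ (t + e * ((γu - γl) * (βu - γu))) - γl :=
    evLE (by fun_prop) (by fun_prop) (by simpa using h7s)
  have Ee8 : ∀ᶠ e in 𝓝 (0:ℝ),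
      γu * (x + e * βu) - (u + e * (βu * γu)) ≤ γu - (t + e * ((γu - γl) * (βu - γu))) :=
    evLE (by fun_prop) (by fun_prop) (by simpa using h8s)
  have Eeden : ∀ᶠ e in 𝓝 (0:ℝ),
      (0:ℝ) < (y + e * (-(βu * γu))) + (u + e * (βu * γu)) - γl * (x + e * βu) :=
    evLT (by fun_prop) (by fun_prop) (by simpa using hys)
  have Eepoly : ∀ᶠ e in 𝓝 (0:ℝ),
      ((γu - γl) * (y + e * (-(βu * γu))) + βu * (γu * (x + e * βu) - (u + e * (βu * γu))) - βu * (γu - (t + e * ((γu - γl) * (βu - γu))))) * ((y + e * (-(βu * γu))) + (u + e * (βu * γu)) - γl * (x + e * βu)) + γl * (y + e * (-(βu * γu))) * ((u + e * (βu * γu)) - γl * (x + e * βu)) < 0 :=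
    evLT (by fun_prop) (by fun_prop) (by simp; linarith [hkey])
  filter_upwards [Ee2, Ee4, Ee5, Ee7, Ee8, Eeden, Eepoly] with e e2 e4 e5 e7 e8 eden epoly
  refine memR2_intro _ _ _ _ _ _ _ _ _ ?_ e2 ?_ e4 e5 ?_ e7 e8 ?_ ?_
  · linarith [h1t]
  · linarith [h3]
  · linarith [h6t]
  · linarith [h9]
  · intro _
    have h' : γl * (y + e * (-(βu * γu))) * ((u + e * (βu * γu)) - γl * (x + e * βu)) / ((y + e * (-(βu * γu))) + (u + e * (βu * γu)) - γl * (x + e * βu)) ≤ βu * (γu - (t + e * ((γu - γl) * (βu - γu)))) - (γu - γl) * (y + e * (-(βu * γu))) - βu * (γu * (x + e * βu) - (u + e * (βu * γu))) := by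
      rw [div_le_iff₀ eden]
      linarith [epoly]
    linarith [h']

private lemma caseN (βl βu γl γu x u y z t : ℝ)
    (hγ : γl < γu)
    (hγu : γu < 0)
    (hβl : βl < 0)
    (hβu : 0 < βu)
    (h1 : y + u ≤ 0)
    (h2 : z + x ≤ 1)
    (h3 : y ≤ βu * z)
    (h4 : βl * z ≤ y)
    (h5 : 0 ≤ u - γl * x)
    (h6 : 0 ≤ γu * x - u)
    (h7 : u - γl * x ≤ t - γl)
    (h8 : γu * x - u ≤ γu - t)
    (h9 : (γu - γl) * y + γl * (γu * x - u) + βu * (u - γl * x) ≤ βu * (t - γl))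
    (h5s : 0 < u - γl * x)
    (h8s : γu * x - u < γu - t)
    (hy : 0 < y)
    (h4s : βl * z < y)
    (hys : 0 < y + u - γl * x)
    (hkey : ((γu - γl) * y + βu * (γu * x - u) - βu * (γu - t)) * (y + u - γl * x) + γl * y * (u - γl * x) < 0)
    (h7s : u - γl * x < t - γl)
    (h6t : γu * x - u = 0)
    (h1t : y + u = 0)
    (h3s : y < βu * z)
    :
    ∃ p₁ p₂ : ℝ × ℝ × ℝ × ℝ × ℝ, p₁ ∈ setR2 βl βu γl γu ∧ p₂ ∈ setR2 βl βu γl γu ∧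
      p₁ ≠ p₂ ∧ ((x, u, y, z, t) : ℝ × ℝ × ℝ × ℝ × ℝ) = (1/2 : ℝ) • p₁ + (1/2 : ℝ) • p₂ := by
  refine mk_pair βl βu γl γu x u y z t βu (βu * γu) (-(βu * γu)) (-βu) ((γu - γl) * (βu - γu))
    (Or.inl (ne_of_gt hβu)) ?_
  have Ee3 : ∀ᶠ e in 𝓝 (0:ℝ),
      (y + e * (-(βu * γu))) ≤ βu * (z + e * (-βu)) :=
    evLE (by fun_prop) (by fun_prop) (by simpa using h3s)
  have Ee4 : ∀ᶠ e in 𝓝 (0:ℝ),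
      βl * (z + e * (-βu)) ≤ (y + e * (-(βu * γu))) :=
    evLE (by fun_prop) (by fun_prop) (by simp; linarith [h4s])
  have Ee5 : ∀ᶠ e in 𝓝 (0:ℝ),
      (0:ℝ) ≤ (u + e * (βu * γu)) - γl * (x + e * βu) :=
    evLE (by fun_prop) (by fun_prop) (by simpa using h5s)
  have Ee7 : ∀ᶠ e in 𝓝 (0:ℝ),
      (u + e * (βu * γu)) - γl * (x + e * βu) ≤ (t + e * ((γu - γl) * (βu - γu))) - γl :=
    evLE (by fun_prop) (by fun_prop) (by simpa using h7s)
  have Ee8 : ∀ᶠ e in 𝓝 (0:ℝ),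
      γu * (x + e * βu) - (u + e * (βu * γu)) ≤ γu - (t + e * ((γu - γl) * (βu - γu))) :=
    evLE (by fun_prop) (by fun_prop) (by simpa using h8s)
  have Eeden : ∀ᶠ e in 𝓝 (0:ℝ),
      (0:ℝ) < (y + e * (-(βu * γu))) + (u + e * (βu * γu)) - γl * (x + e * βu) :=
    evLT (by fun_prop) (by fun_prop) (by simpa using hys)
  have Eepoly : ∀ᶠ e in 𝓝 (0:ℝ),
      ((γu - γl) * (y + e * (-(βu * γu))) + βu * (γu * (x + e * βu) - (u + e * (βu * γu))) - βu * (γu - (t + e * ((γu - γl) * (βu - γu))))) * ((y + e * (-(βu * γu))) + (u + e * (βu * γu)) - γl * (x + e * βu)) + γl * (y + e * (-(βu * γu))) * ((u + e * (βu * γu)) - γl * (x + e * βu)) < 0 :=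
    evLT (by fun_prop) (by fun_prop) (by simp; linarith [hkey])
  filter_upwards [Ee3, Ee4, Ee5, Ee7, Ee8, Eeden, Eepoly] with e e3 e4 e5 e7 e8 eden epoly
  refine memR2_intro _ _ _ _ _ _ _ _ _ ?_ ?_ e3 e4 e5 ?_ e7 e8 ?_ ?_
  · linarith [h1t]
  · linarith [h2]
  · linarith [h6t]
  · linarith [h9]
  · intro _
    have h' : γl * (y + e * (-(βu * γu))) * ((u + e * (βu * γu)) - γl * (x + e * βu)) / ((y + e * (-(βu * γu))) + (u + e * (βu * γu)) - γl * (x + e * βu)) ≤ βu * (γu - (t + e * ((γu - γl) * (βu - γu)))) - (γu - γl) * (y + e * (-(βu * γu))) - βu * (γu * (x + e * βu) - (u + e * (βu * γu))) := by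
      rw [div_le_iff₀ eden]
      linarith [epoly]
    linarith [h']

private lemma caseTd (βl βu γl γu x u y z t : ℝ)
    (hγ : γl < γu)
    (hγu : γu < 0)
    (hβl : βl < 0)
    (hβu : 0 < βu)
    (h1 : y + u ≤ 0)
    (h2 : z + x ≤ 1)
    (h3 : y ≤ βu * z)
    (h4 : βl * z ≤ y)
    (h5 : 0 ≤ u - γl * x)
    (h6 : 0 ≤ γu * x - u)
    (h7 : u - γl * x ≤ t - γl)
    (h8 : γu * x - u ≤ γu - t)
    (h9 : (γu - γl) * y + γl * (γu * x - u) + βu * (u - γl * x) ≤ βu * (t - γl))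
    (h5s : 0 < u - γl * x)
    (h8s : γu * x - u < γu - t)
    (hy : 0 < y)
    (h4s : βl * z < y)
    (hys : 0 < y + u - γl * x)
    (hkey : ((γu - γl) * y + βu * (γu * x - u) - βu * (γu - t)) * (y + u - γl * x) + γl * y * (u - γl * x) < 0)
    (h7s : u - γl * x < t - γl)
    (h9s : (γu - γl) * y + γl * (γu * x - u) + βu * (u - γl * x) < βu * (t - γl))
    :
    ∃ p₁ p₂ : ℝ × ℝ × ℝ × ℝ × ℝ, p₁ ∈ setR2 βl βu γl γu ∧ p₂ ∈ setR2 βl βu γl γu ∧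
      p₁ ≠ p₂ ∧ ((x, u, y, z, t) : ℝ × ℝ × ℝ × ℝ × ℝ) = (1/2 : ℝ) • p₁ + (1/2 : ℝ) • p₂ := by
  refine mk_pair βl βu γl γu x u y z t 0 0 0 0 1
    (Or.inr one_ne_zero) ?_
  have Ee7 : ∀ᶠ e in 𝓝 (0:ℝ),
      (u + e * 0) - γl * (x + e * 0) ≤ (t + e * 1) - γl :=
    evLE (by fun_prop) (by fun_prop) (by simpa using h7s)
  have Ee8 : ∀ᶠ e in 𝓝 (0:ℝ),
      γu * (x + e * 0) - (u + e * 0) ≤ γu - (t + e * 1) :=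
    evLE (by fun_prop) (by fun_prop) (by simpa using h8s)
  have Ee9 : ∀ᶠ e in 𝓝 (0:ℝ),
      (γu - γl) * (y + e * 0) + γl * (γu * (x + e * 0) - (u + e * 0)) + βu * ((u + e * 0) - γl * (x + e * 0)) ≤ βu * ((t + e * 1) - γl) :=
    evLE (by fun_prop) (by fun_prop) (by simpa using h9s)
  have Eeden : ∀ᶠ e in 𝓝 (0:ℝ),
      (0:ℝ) < (y + e * 0) + (u + e * 0) - γl * (x + e * 0) :=
    evLT (by fun_prop) (by fun_prop) (by simpa using hys)
  have Eepoly : ∀ᶠ e in 𝓝 (0:ℝ),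
      ((γu - γl) * (y + e * 0) + βu * (γu * (x + e * 0) - (u + e * 0)) - βu * (γu - (t + e * 1))) * ((y + e * 0) + (u + e * 0) - γl * (x + e * 0)) + γl * (y + e * 0) * ((u + e * 0) - γl * (x + e * 0)) < 0 :=
    evLT (by fun_prop) (by fun_prop) (by simp; linarith [hkey])
  filter_upwards [Ee7, Ee8, Ee9, Eeden, Eepoly] with e e7 e8 e9 eden epoly
  refine memR2_intro _ _ _ _ _ _ _ _ _ ?_ ?_ ?_ ?_ ?_ ?_ e7 e8 e9 ?_
  · linarith [h1]
  · linarith [h2]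
  · linarith [h3]
  · linarith [h4]
  · linarith [h5]
  · linarith [h6]
  · intro _
    have h' : γl * (y + e * 0) * ((u + e * 0) - γl * (x + e * 0)) / ((y + e * 0) + (u + e * 0) - γl * (x + e * 0)) ≤ βu * (γu - (t + e * 1)) - (γu - γl) * (y + e * 0) - βu * (γu * (x + e * 0) - (u + e * 0)) := by
      rw [div_le_iff₀ eden]
      linarith [epoly]
    linarith [h']

set_option maxHeartbeats 800000 in
theorem stmt19 (βl βu γl γu x u y z t : ℝ)
    (hγ : γl < γu) (hγu : γu < 0) (hβl : βl < 0) (hβu : 0 < βu)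
    (hp : (x, u, y, z, t) ∈ setR2 βl βu γl γu)
    (hx0 : 0 < x) (hx1 : x < 1) (htl : γl < t) (htu : t < γu)
    (hugt : x * t < u) :
    ∃ p₁ p₂ : ℝ × ℝ × ℝ × ℝ × ℝ, p₁ ∈ setR2 βl βu γl γu ∧ p₂ ∈ setR2 βl βu γl γu ∧
      p₁ ≠ p₂ ∧ ((x, u, y, z, t) : ℝ × ℝ × ℝ × ℝ × ℝ) = (1/2 : ℝ) • p₁ + (1/2 : ℝ) • p₂ := by
  have hp' : memR2 βl βu γl γu x u y z t := hp
  obtain ⟨⟨h1, h2, h3, h4, h5, h6, h7, h8⟩, h9, _⟩ := hp'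
  have hγl : γl < 0 := hγ.trans hγu
  have h5s : 0 < u - γl * x := by
    nlinarith [mul_pos hx0 (show (0:ℝ) < t - γl by linarith)]
  have h8s : γu * x - u < γu - t := by
    nlinarith [mul_pos (show (0:ℝ) < 1 - x by linarith) (show (0:ℝ) < γu - t by linarith)]
  have hu0 : u < 0 := by nlinarith [mul_neg_of_neg_of_pos hγu hx0]
  have hzge : 0 ≤ z := by
    by_contra hzc
    push_neg at hzc
    nlinarith [h3, h4]
  rcases le_or_gt y 0 with hyle | hy
  · by_cases h4t : βl * z = y
    · rcases eq_or_lt_of_le hzge with hz0 | hzpos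
      · have hz : z = 0 := hz0.symm
        have hy0 : y = 0 := by rw [hz] at h4t; simpa using h4t.symm
        exact caseC0 βl βu γl γu x u y z t hγ hγu hx1 h3 h4 h6 h7 h9 hu0 h5s h8s hz hy0
      · have hyneg : y < 0 := by nlinarith [h4t]
        exact caseC2 βl βu γl γu x u y z t hγ hγu hβl hβu h2 h4 h6 h7 h9 hu0 h5s h8s hzpos hyneg
    · have h4s : βl * z < y := lt_of_le_of_ne h4 h4t
      have h3s : y < βu * z := by
        rcases lt_or_eq_of_le h3 with h | heq
        · exact h
        · exfalso
          have hzle : z ≤ 0 := by nlinarith [heq]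
          have hz0 : z = 0 := le_antisymm hzle hzge
          apply h4t
          rw [hz0] at heq ⊢
          simp only [mul_zero] at heq ⊢
          exact heq.symm
      exact caseC1 βl βu γl γu x u y z t hγ hγu h2 h6 h7 h9 hu0 h5s h8s hyle h4s h3s
  · have hys : 0 < y + u - γl * x := by linarith
    have hkey : ((γu - γl) * y + βu * (γu * x - u) - βu * (γu - t)) * (y + u - γl * x)
        + γl * y * (u - γl * x) < 0 :=
      key10 βl βu γl γu x u y z t hγ hγu hβu h1 h2 h3 hx0 hx1 htl htu hugt hy
    have h4s : βl * z < y := by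
      linarith [mul_nonpos_of_nonpos_of_nonneg hβl.le hzge]
    by_cases h7t : u - γl * x = t - γl
    · have h1s : y + u < 0 := by
        rcases lt_or_eq_of_le h1 with h | heq
        · exact h
        · exfalso
          have hy' : y = -u := by linarith
          have hA : (γu - γl) * y = (γu - γl) * (-u) := by rw [hy']
          have hB : βu * (u - γl * x) = βu * (t - γl) := by rw [h7t]
          have hC : γu * (u - γl * x) = γu * (t - γl) := by rw [h7t]
          have hpos : 0 < (-γu) * (t - γl) := mul_pos (by linarith) (by linarith)
          linarith [h9, hA, hB, hC, hpos]
      have h6s : 0 < γu * x - u := by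
        rcases lt_or_eq_of_le h6 with h | heq
        · exact h
        · exfalso
          have hB : βu * (u - γl * x) = βu * (t - γl) := by rw [h7t]
          have hq0 : γl * (γu * x - u) = 0 := by rw [← heq]; ring
          linarith [h9, hB, hq0, mul_pos (show (0:ℝ) < γu - γl by linarith) hy]
      exact caseG βl βu γl γu x u y z t hγ hγu hβl hβu h1 h2 h3 h4 h5 h6 h7 h8 h9
        h5s h8s hy h4s hys hkey h1s h6s h7t
    · have h7s : u - γl * x < t - γl := lt_of_le_of_ne h7 h7t
      by_cases h6t : γu * x - u = 0
      · by_cases h1t : y + u = 0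
        · by_cases h2t : z + x = 1
          · by_cases h3t : y = βu * z
            · have h9s : (γu - γl) * y + γl * (γu * x - u) + βu * (u - γl * x)
                  < βu * (t - γl) := by
                rcases lt_or_eq_of_le h9 with h | heq
                · exact h
                · exfalso
                  have hu6 : u = γu * x := by linarith [h6t]
                  have hyx : y = -(γu * x) := by linarith [h1t, h6t]
                  have hxw : (βu - γu) * x = βu := by
                    linear_combination βu * h2t + h3t - h1t - h6t
                  have hA : (γu - γl) * y = (γu - γl) * (-(γu * x)) := by rw [hyx]
                  have hB : γl * (γu * x - u) = 0 := by rw [hu6]; ring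
                  have hC : βu * (u - γl * x) = βu * ((γu - γl) * x) := by rw [hu6]; ring
                  have h99 : (γu - γl) * ((βu - γu) * x) = (γu - γl) * βu := by rw [hxw]
                  have hlt : βu * t < βu * γu := by
                    have := mul_lt_mul_of_pos_left htu hβu; linarith
                  linarith [heq, hA, hB, hC, h99, hlt]
              exact caseTd βl βu γl γu x u y z t hγ hγu hβl hβu h1 h2 h3 h4 h5 h6 h7 h8 h9
                h5s h8s hy h4s hys hkey h7s h9s
            · have h3s : y < βu * z := lt_of_le_of_ne h3 h3t
              exact caseN βl βu γl γu x u y z t hγ hγu hβl hβu h1 h2 h3 h4 h5 h6 h7 h8 h9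
                h5s h8s hy h4s hys hkey h7s h6t h1t h3s
          · have h2s : z + x < 1 := lt_of_le_of_ne h2 h2t
            exact caseM βl βu γl γu x u y z t hγ hγu hβl hβu h1 h2 h3 h4 h5 h6 h7 h8 h9
              h5s h8s hy h4s hys hkey h7s h6t h1t h2s
        · have h1s : y + u < 0 := lt_of_le_of_ne h1 h1t
          exact caseL βl βu γl γu x u y z t hγ hγu hβl hβu h1 h2 h3 h4 h5 h6 h7 h8 h9
            h5s h8s hy h4s hys hkey h7s h6t h1s
      · have h6s : 0 < γu * x - u := h6.lt_of_ne fun hq => h6t hq.symm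
        exact caseK βl βu γl γu x u y z t hγ hγu hβl hβu h1 h2 h3 h4 h5 h6 h7 h8 h9
          h5s h8s hy h4s hys hkey h7s h6s
end
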